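/- arXiv:2407.09664 — 5 statements merged into one kernel-verified Lean document; each statement's English description precedes it below -/
import Mathlib

section
/- Chatterjee's master lemma: under the exchangeable-pair setup, the moment generating function M(λ) = E[exp(λ f(X))] is differentiable at every λ ∈ ℝ and its derivative satisfies M'(λ) ≤ |λ| · E[ exp(λ f(X)) · V ] for all λ ∈ ℝ. -/
/-!
Differentiating under the integral sign gives `M'(λ) = E[f(X) e^{λ f(X)}]`. Since
`E[F(X,X') | X] = f(X)`, this equals `E[e^{λ f(X)} F(X,X')]`, and exchangeability together with
the antisymmetry of `F` symmetrizes it to `½ E[(e^{λ f(X)} - e^{λ f(X')}) F(X,X')]`.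
The elementary bound `|e^a - e^b| ≤ ½ |a - b| (e^a + e^b)` and exchangeability once more bound
this by `|λ| E[e^{λ f(X)} |(f(X) - f(X')) F(X,X')|] / 2`, which is `|λ| E[e^{λ f(X)} V]` after
conditioning on `X`. Finite exponential moments give every `Lᵖ` bound needed, through Hölder's
inequality.
-/

open MeasureTheory ProbabilityTheory Real
open scoped NNReal ENNReal

lemma two_mul_exp_sub_one_le {t : ℝ} (ht : 0 ≤ t) : 2 * (exp t - 1) ≤ t * (exp t + 1) := by
  have hmono : Monotone fun s => s * (exp s + 1) - 2 * (exp s - 1) := by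
    refine monotone_of_hasDerivAt_nonneg (f' := fun s => s * exp s + 1 - exp s) (fun s => ?_)
      fun s => ?_
    · exact (((hasDerivAt_id' s).mul ((hasDerivAt_exp s).add_const 1)).sub
        (((hasDerivAt_exp s).sub_const 1).const_mul 2)).congr_deriv (by ring)
    · have h := mul_le_mul_of_nonneg_left (add_one_le_exp (-s)) (exp_pos s).le
      rw [← exp_add, add_neg_cancel, exp_zero] at h
      simp only [Pi.zero_apply]; linarith
  simpa using hmono ht

/-- The logarithmic mean of `exp a` and `exp b` is at most their arithmetic mean. -/
lemma abs_exp_sub_exp_le (a b : ℝ) : |exp a - exp b| ≤ |a - b| * (exp a + exp b) / 2 := by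
  wlog hba : b ≤ a generalizing a b
  · rw [abs_sub_comm, abs_sub_comm a, add_comm]; exact this b a (le_of_not_ge hba)
  have hexp : exp a = exp (a - b) * exp b := by rw [← exp_add, sub_add_cancel]
  rw [abs_of_nonneg (sub_nonneg.2 (exp_le_exp.2 hba)), abs_of_nonneg (sub_nonneg.2 hba), hexp]
  nlinarith [two_mul_exp_sub_one_le (sub_nonneg.2 hba), exp_pos b]

lemma exp_mul_sub_exp_mul_mul_le (l y y' g : ℝ) :
    (exp (l * y) - exp (l * y')) * g
      ≤ |l| / 2 * ((exp (l * y) + exp (l * y')) * |(y - y') * g|) :=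
  calc (exp (l * y) - exp (l * y')) * g
      ≤ |exp (l * y) - exp (l * y')| * |g| := by rw [← abs_mul]; exact le_abs_self _
    _ ≤ |l * y - l * y'| * (exp (l * y) + exp (l * y')) / 2 * |g| :=
        mul_le_mul_of_nonneg_right (abs_exp_sub_exp_le _ _) (abs_nonneg g)
    _ = |l| / 2 * ((exp (l * y) + exp (l * y')) * |(y - y') * g|) := by
        rw [← mul_sub, abs_mul, abs_mul]; ring

lemma memLp_exp_mul_of_forall_integrable {Ω : Type*} [MeasurableSpace Ω] {μ : Measure Ω}
    {Y : Ω → ℝ} (hY : ∀ t, Integrable (fun ω => exp (t * Y ω)) μ) (t : ℝ)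
    {p : ℝ≥0∞} (hp_top : p ≠ ∞) : MemLp (fun ω => exp (t * Y ω)) p μ := by
  lift p to ℝ≥0 using hp_top
  rcases eq_or_ne p 0 with rfl | hp
  · exact memLp_zero_iff_aestronglyMeasurable.2 (hY t).1
  rw [← integrable_norm_rpow_iff (hY t).1 (mod_cast hp) ENNReal.coe_ne_top]
  convert hY (p * t) using 2 with ω
  rw [norm_of_nonneg (exp_pos _).le, ENNReal.coe_toReal, ← exp_mul]
  ring_nf

lemma memLp_of_forall_integrable_exp_mul {Ω : Type*} [MeasurableSpace Ω] {μ : Measure Ω}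
    {Y : Ω → ℝ} (hY : ∀ t, Integrable (fun ω => exp (t * Y ω)) μ)
    {p : ℝ≥0∞} (hp : p ≠ ∞) : MemLp Y p μ := by
  lift p to ℝ≥0 using hp
  exact memLp_of_mem_interior_integrableExpSet (by simp [integrableExpSet, hY]) p

instance ENNReal.holderTriple_four_four_two : ENNReal.HolderTriple 4 4 2 :=
  ⟨by rw [show (4 : ℝ≥0∞) = 2 * 2 by norm_num, ENNReal.mul_inv (by simp) (by simp),
    ← add_mul, ENNReal.inv_two_add_inv_two, one_mul]⟩

lemma integral_mul_condExp_of_stronglyMeasurable {Ω : Type*} {m m₀ : MeasurableSpace Ω}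
    {μ : Measure Ω} (hm : m ≤ m₀) [SigmaFinite (μ.trim hm)] {φ g : Ω → ℝ}
    (hφ : StronglyMeasurable[m] φ) (hφg : Integrable (φ * g) μ) (hg : Integrable g μ) :
    ∫ ω, φ ω * μ[g|m] ω ∂μ = ∫ ω, φ ω * g ω ∂μ := by
  conv_rhs => rw [← integral_condExp hm]
  exact integral_congr_ae (condExp_mul_of_stronglyMeasurable_left hφ hφg hg).symm

section ExchangeablePair

variable {Ω 𝒳 : Type*} [MeasurableSpace Ω] [MeasurableSpace 𝒳] {P : Measure Ω}
  {X X' : Ω → 𝒳} {F : 𝒳 → 𝒳 → ℝ}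

lemma integral_mul_eq_half_integral_sub_mul_of_antisymm
    (hXX' : IdentDistrib (fun ω => (X ω, X' ω)) (fun ω => (X' ω, X ω)) P P)
    {φ : 𝒳 → ℝ} (hφ : Measurable φ) (hF : Measurable fun p : 𝒳 × 𝒳 => F p.1 p.2)
    (hFanti : ∀ x y, F x y = -F y x)
    (hint : Integrable (fun ω => φ (X ω) * F (X ω) (X' ω)) P) :
    ∫ ω, φ (X ω) * F (X ω) (X' ω) ∂P
      = 1 / 2 * ∫ ω, (φ (X ω) - φ (X' ω)) * F (X ω) (X' ω) ∂P := by
  have hswap : IdentDistrib (fun ω => φ (X' ω) * F (X ω) (X' ω))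
      (fun ω => φ (X ω) * F (X' ω) (X ω)) P P :=
    hXX'.comp ((hφ.comp measurable_snd).mul hF)
  have hneg : (fun ω => φ (X ω) * F (X' ω) (X ω))
      = fun ω => -(φ (X ω) * F (X ω) (X' ω)) := by
    funext ω; rw [hFanti (X' ω)]; ring
  rw [hneg] at hswap
  have hint' := hswap.integrable_iff.2 hint.neg
  simp_rw [sub_mul]
  rw [integral_sub hint hint', hswap.integral_eq, integral_neg]
  ring

lemma integral_mul_eq_half_integral_sub_mul_of_condExp [IsFiniteMeasure P] (hX : Measurable X)
    (hXX' : IdentDistrib (fun ω => (X ω, X' ω)) (fun ω => (X' ω, X ω)) P P)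
    {f φ : 𝒳 → ℝ} (hφ : Measurable φ) (hF : Measurable fun p : 𝒳 × 𝒳 => F p.1 p.2)
    (hFanti : ∀ x y, F x y = -F y x) (hG : Integrable (fun ω => F (X ω) (X' ω)) P)
    (hφG : Integrable (fun ω => φ (X ω) * F (X ω) (X' ω)) P)
    (hFcond : P[fun ω => F (X ω) (X' ω) | MeasurableSpace.comap X inferInstance]
      =ᵐ[P] fun ω => f (X ω)) :
    ∫ ω, f (X ω) * φ (X ω) ∂P
      = 1 / 2 * ∫ ω, (φ (X ω) - φ (X' ω)) * F (X ω) (X' ω) ∂P := by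
  have hφX : StronglyMeasurable[MeasurableSpace.comap X inferInstance] fun ω => φ (X ω) :=
    (hφ.comp (comap_measurable X)).stronglyMeasurable
  rw [← integral_mul_eq_half_integral_sub_mul_of_antisymm hXX' hφ hF hFanti hφG,
    ← integral_mul_condExp_of_stronglyMeasurable hX.comap_le hφX hφG hG]
  refine integral_congr_ae ?_
  filter_upwards [hFcond] with ω hω
  rw [hω, mul_comm]

lemma integral_exp_sub_exp_mul_le
    (hXX' : IdentDistrib (fun ω => (X ω, X' ω)) (fun ω => (X' ω, X ω)) P P)
    {f : 𝒳 → ℝ} (hf : Measurable f) (hF : Measurable fun p : 𝒳 × 𝒳 => F p.1 p.2)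
    (hFanti : ∀ x y, F x y = -F y x) (l : ℝ)
    (hdiff : Integrable (fun ω =>
      (exp (l * f (X ω)) - exp (l * f (X' ω))) * F (X ω) (X' ω)) P)
    (habs : Integrable (fun ω =>
      exp (l * f (X ω)) * |(f (X ω) - f (X' ω)) * F (X ω) (X' ω)|) P) :
    ∫ ω, (exp (l * f (X ω)) - exp (l * f (X' ω))) * F (X ω) (X' ω) ∂P
      ≤ |l| * ∫ ω, exp (l * f (X ω)) * |(f (X ω) - f (X' ω)) * F (X ω) (X' ω)| ∂P := by
  have hsymm : ∀ x y, |(f y - f x) * F y x| = |(f x - f y) * F x y| := by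
    intro x y; rw [hFanti y, show (f y - f x) * -F x y = (f x - f y) * F x y by ring]
  have hswap : IdentDistrib
      (fun ω => exp (l * f (X' ω)) * |(f (X ω) - f (X' ω)) * F (X ω) (X' ω)|)
      (fun ω => exp (l * f (X ω)) * |(f (X ω) - f (X' ω)) * F (X ω) (X' ω)|) P P := by
    have hg : Measurable fun p : 𝒳 × 𝒳 =>
        exp (l * f p.2) * |(f p.1 - f p.2) * F p.1 p.2| := by fun_prop
    simpa only [Function.comp_def, hsymm] using hXX'.comp hg
  have habs' := hswap.integrable_iff.2 habs
  calc ∫ ω, (exp (l * f (X ω)) - exp (l * f (X' ω))) * F (X ω) (X' ω) ∂P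
      ≤ ∫ ω, |l| / 2 * ((exp (l * f (X ω)) + exp (l * f (X' ω)))
          * |(f (X ω) - f (X' ω)) * F (X ω) (X' ω)|) ∂P := by
        refine integral_mono hdiff ?_ fun ω => exp_mul_sub_exp_mul_mul_le _ _ _ _
        simp_rw [add_mul]
        exact (habs.add habs').const_mul _
    _ = |l| * ∫ ω, exp (l * f (X ω)) * |(f (X ω) - f (X' ω)) * F (X ω) (X' ω)| ∂P := by
        simp_rw [add_mul]
        rw [integral_const_mul, integral_add habs habs', hswap.integral_eq]
        ring

theorem integral_mul_exp_le_of_exchangeable [IsFiniteMeasure P] (hX : Measurable X)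
    (hXX' : IdentDistrib (fun ω => (X ω, X' ω)) (fun ω => (X' ω, X ω)) P P)
    {f : 𝒳 → ℝ} (hf : Measurable f)
    (hmgf : ∀ t, Integrable (fun ω => exp (t * f (X ω))) P)
    (hF : Measurable fun p : 𝒳 × 𝒳 => F p.1 p.2) (hFanti : ∀ x y, F x y = -F y x)
    (hG : MemLp (fun ω => F (X ω) (X' ω)) 2 P)
    (hFcond : P[fun ω => F (X ω) (X' ω) | MeasurableSpace.comap X inferInstance]
      =ᵐ[P] fun ω => f (X ω)) (l : ℝ) :
    ∫ ω, f (X ω) * exp (l * f (X ω)) ∂P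
      ≤ |l| * ∫ ω, exp (l * f (X ω)) * (1 / 2 * P[fun ω' =>
        |(f (X ω') - f (X' ω')) * F (X ω') (X' ω')| | MeasurableSpace.comap X inferInstance] ω)
        ∂P := by
  have hmgf' : ∀ t, Integrable (fun ω => exp (t * f (X' ω))) P := fun t =>
    ((hXX'.comp measurable_fst).comp (hf.const_mul t).exp).integrable_iff.1 (hmgf t)
  have hexp (p : ℝ≥0∞) (hp : p ≠ ∞) := memLp_exp_mul_of_forall_integrable hmgf l hp
  have hexp' (p : ℝ≥0∞) (hp : p ≠ ∞) := memLp_exp_mul_of_forall_integrable hmgf' l hp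
  have hsub (p : ℝ≥0∞) (hp : p ≠ ∞) : MemLp (fun ω => f (X ω) - f (X' ω)) p P :=
    (memLp_of_forall_integrable_exp_mul hmgf hp).sub
      (memLp_of_forall_integrable_exp_mul hmgf' hp)
  have hH : Integrable (fun ω => |(f (X ω) - f (X' ω)) * F (X ω) (X' ω)|) P :=
    ((hsub 2 ENNReal.ofNat_ne_top).integrable_mul hG).abs
  have hexpH : Integrable (fun ω =>
      exp (l * f (X ω)) * |(f (X ω) - f (X' ω)) * F (X ω) (X' ω)|) P := by
    have h := (((hsub 4 ENNReal.ofNat_ne_top).mul' (r := 2)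
      (hexp 4 ENNReal.ofNat_ne_top)).integrable_mul hG).abs
    refine h.congr (.of_forall fun ω => ?_)
    simp only [Pi.mul_apply, abs_mul, abs_of_pos (exp_pos _)]
    ring
  have hexpX : StronglyMeasurable[MeasurableSpace.comap X inferInstance]
      fun ω => exp (l * f (X ω)) :=
    ((hf.const_mul l).exp.comp (comap_measurable X)).stronglyMeasurable
  calc ∫ ω, f (X ω) * exp (l * f (X ω)) ∂P
      = 1 / 2 * ∫ ω, (exp (l * f (X ω)) - exp (l * f (X' ω))) * F (X ω) (X' ω) ∂P :=
        integral_mul_eq_half_integral_sub_mul_of_condExp hX hXX' (hf.const_mul l).exp hF hFanti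
          (hG.integrable one_le_two) ((hexp 2 ENNReal.ofNat_ne_top).integrable_mul hG) hFcond
    _ ≤ 1 / 2 * (|l| *
          ∫ ω, exp (l * f (X ω)) * |(f (X ω) - f (X' ω)) * F (X ω) (X' ω)| ∂P) := by
        gcongr
        refine integral_exp_sub_exp_mul_le hXX' hf hF hFanti l ?_ hexpH
        exact ((hexp 2 ENNReal.ofNat_ne_top).sub (hexp' 2 ENNReal.ofNat_ne_top)).integrable_mul hG
    _ = |l| * ∫ ω, exp (l * f (X ω)) * (1 / 2 * P[fun ω' =>
        |(f (X ω') - f (X' ω')) * F (X ω') (X' ω')| | MeasurableSpace.comap X inferInstance] ω)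
        ∂P := by
        simp_rw [mul_left_comm _ (1 / 2 : ℝ)]
        rw [integral_const_mul,
          integral_mul_condExp_of_stronglyMeasurable hX.comap_le hexpX hexpH hH]
        ring

end ExchangeablePair

theorem chatterjee_master_lemma_general
    {Ω 𝒳 : Type*} [MeasurableSpace Ω] [MeasurableSpace 𝒳]
    (P : Measure Ω) [IsProbabilityMeasure P]
    (X X' : Ω → 𝒳) (hX : Measurable X) (hX' : Measurable X')
    (hexch : P.map (fun ω => (X ω, X' ω)) = P.map (fun ω => (X' ω, X ω)))
    (f : 𝒳 → ℝ) (hf : Measurable f)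
    (hmgf : ∀ t : ℝ, Integrable (fun ω => Real.exp (t * f (X ω))) P)
    (F : 𝒳 → 𝒳 → ℝ) (hFmeas : Measurable fun p : 𝒳 × 𝒳 => F p.1 p.2)
    (hFanti : ∀ x y, F x y = -F y x)
    (hFL2 : Integrable (fun ω => (F (X ω) (X' ω)) ^ 2) P)
    (hFcond : MeasureTheory.condExp (MeasurableSpace.comap X inferInstance) P
        (fun ω => F (X ω) (X' ω)) =ᵐ[P] fun ω => f (X ω))
    (V : Ω → ℝ)
    (hV : V = fun ω => (1 / 2 : ℝ) *
      (MeasureTheory.condExp (MeasurableSpace.comap X inferInstance) P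
        (fun ω' => |(f (X ω') - f (X' ω')) * F (X ω') (X' ω')|) ω)) :
    ∀ l : ℝ,
      DifferentiableAt ℝ (fun t => ∫ ω, Real.exp (t * f (X ω)) ∂P) l ∧
      deriv (fun t => ∫ ω, Real.exp (t * f (X ω)) ∂P) l
        ≤ |l| * ∫ ω, Real.exp (l * f (X ω)) * V ω ∂P := by
  intro l
  have hXX' : IdentDistrib (fun ω => (X ω, X' ω)) (fun ω => (X' ω, X ω)) P P :=
    ⟨(hX.prodMk hX').aemeasurable, (hX'.prodMk hX).aemeasurable, hexch⟩
  have hG : MemLp (fun ω => F (X ω) (X' ω)) 2 P :=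
    (memLp_two_iff_integrable_sq (hFmeas.comp (hX.prodMk hX')).aestronglyMeasurable).2 hFL2
  have hderiv : HasDerivAt (fun t => ∫ ω, exp (t * f (X ω)) ∂P)
      (∫ ω, f (X ω) * exp (l * f (X ω)) ∂P) l :=
    hasDerivAt_mgf (by simp [integrableExpSet, hmgf])
  refine ⟨hderiv.differentiableAt, ?_⟩
  rw [hderiv.deriv, hV]
  exact integral_mul_exp_le_of_exchangeable hX hXX' hf hmgf hFmeas hFanti hG hFcond l

/-- Chatterjee's master lemma for exchangeable pairs: the moment generating function
`M(λ) = E[exp(λ f(X))]` is differentiable everywhere and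
`M'(λ) ≤ |λ| · E[exp(λ f(X)) · V]`. -/
theorem chatterjee_master_lemma
    {Ω 𝒳 : Type*} [MeasurableSpace Ω] [MeasurableSpace 𝒳]
    (P : Measure Ω) [IsProbabilityMeasure P]
    (X X' : Ω → 𝒳) (hX : Measurable X) (hX' : Measurable X')
    (hexch : P.map (fun ω => (X ω, X' ω)) = P.map (fun ω => (X' ω, X ω)))
    (f : 𝒳 → ℝ) (hf : Measurable f)
    (hmean : ∫ ω, f (X ω) ∂P = 0)
    (hL2 : Integrable (fun ω => (f (X ω)) ^ 2) P)
    (hmgf : ∀ t : ℝ, Integrable (fun ω => Real.exp (t * f (X ω))) P)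
    (F : 𝒳 → 𝒳 → ℝ) (hFmeas : Measurable fun p : 𝒳 × 𝒳 => F p.1 p.2)
    (hFanti : ∀ x y, F x y = -F y x)
    (hFL2 : Integrable (fun ω => (F (X ω) (X' ω)) ^ 2) P)
    (hFcond : MeasureTheory.condExp (MeasurableSpace.comap X inferInstance) P
        (fun ω => F (X ω) (X' ω)) =ᵐ[P] fun ω => f (X ω))
    (V : Ω → ℝ)
    (hV : V = fun ω => (1 / 2 : ℝ) *
      (MeasureTheory.condExp (MeasurableSpace.comap X inferInstance) P
        (fun ω' => |(f (X ω') - f (X' ω')) * F (X ω') (X' ω')|) ω)) :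
    ∀ l : ℝ,
      DifferentiableAt ℝ (fun t => ∫ ω, Real.exp (t * f (X ω)) ∂P) l ∧
      deriv (fun t => ∫ ω, Real.exp (t * f (X ω)) ∂P) l
        ≤ |l| * ∫ ω, Real.exp (l * f (X ω)) * V ω ∂P :=
  chatterjee_master_lemma_general P X X' hX hX' hexch f hf hmgf F hFmeas hFanti hFL2 hFcond V hV
end

section
/- Chatterjee's fourth lemma: under the exchangeable-pair setup, for every positive integer k such that E[f(X)^{2k}] < ∞ and E[V^k] < ∞, one has E[f(X)^{2k}] ≤ (2k − 1)^k · E[V^k]. -/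
open MeasureTheory ProbabilityTheory Finset

/-!
Write `a = f(X)`, `b = f(X')`, `W = F(X, X')` and `k = j + 1`. Since `E[W | X] = a`, the moment
`E[a^(2j+2)]` equals `E[a^(2j+1) W]`, which exchangeability and antisymmetry of `F` turn into
`½ E[(a^(2j+1) - b^(2j+1)) W]`. The bound
`|x^(2j+1) - y^(2j+1)| ≤ (2j+1)/2 (x^(2j) + y^(2j)) |x - y|`, exchangeability once more and
conditioning on `X` give `E[a^(2j+2)] ≤ (2j+1) E[a^(2j) V]`. Young's inequality
`(j+1) c u^j v ≤ j u^(j+1) + c^(j+1) v^(j+1)` with `u = a²`, `c = 2j+1` then absorbs the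
`a^(2j+2)` term. The exponential moments of `a` give all moments of `a` and `b`, which makes every
integrand integrable.
-/

lemma pow_mul_pow_add_pow_mul_pow_le {u v : ℝ} (hu : 0 ≤ u) (hv : 0 ≤ v) {i n : ℕ}
    (hi : i ≤ n) : u ^ i * v ^ (n - i) + u ^ (n - i) * v ^ i ≤ u ^ n + v ^ n := by
  have hsame_sign : 0 ≤ (u ^ i - v ^ i) * (u ^ (n - i) - v ^ (n - i)) := by
    rcases le_total u v with h | h
    · exact mul_nonneg_of_nonpos_of_nonpos (sub_nonpos.2 (pow_le_pow_left₀ hu h _))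
        (sub_nonpos.2 (pow_le_pow_left₀ hu h _))
    · exact mul_nonneg (sub_nonneg.2 (pow_le_pow_left₀ hv h _))
        (sub_nonneg.2 (pow_le_pow_left₀ hv h _))
  have hu' : u ^ i * u ^ (n - i) = u ^ n := by rw [← pow_add, Nat.add_sub_cancel' hi]
  have hv' : v ^ i * v ^ (n - i) = v ^ n := by rw [← pow_add, Nat.add_sub_cancel' hi]
  nlinarith

lemma sum_pow_mul_pow_le {u v : ℝ} (hu : 0 ≤ u) (hv : 0 ≤ v) (n : ℕ) :
    ∑ i ∈ range (n + 1), u ^ i * v ^ (n - i) ≤ (n + 1) / 2 * (u ^ n + v ^ n) := by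
  have hreflect : ∑ i ∈ range (n + 1), u ^ (n - i) * v ^ i
      = ∑ i ∈ range (n + 1), u ^ i * v ^ (n - i) := by
    rw [← sum_range_reflect]
    refine sum_congr rfl fun i hi => ?_
    rw [Nat.add_sub_cancel, Nat.sub_sub_self (Nat.lt_succ_iff.1 (mem_range.1 hi))]
  have hpair : ∑ i ∈ range (n + 1), (u ^ i * v ^ (n - i) + u ^ (n - i) * v ^ i)
      ≤ (n + 1) * (u ^ n + v ^ n) := by
    calc _ ≤ ∑ _i ∈ range (n + 1), (u ^ n + v ^ n) :=
          sum_le_sum fun i hi =>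
            pow_mul_pow_add_pow_mul_pow_le hu hv (Nat.lt_succ_iff.1 (mem_range.1 hi))
      _ = _ := by rw [sum_const, card_range, nsmul_eq_mul]; push_cast; ring
  rw [sum_add_distrib, hreflect] at hpair
  linarith

lemma abs_pow_succ_sub_pow_succ_le (x y : ℝ) (n : ℕ) :
    |x ^ (n + 1) - y ^ (n + 1)| ≤ (n + 1) / 2 * (|x| ^ n + |y| ^ n) * |x - y| := by
  rw [← geom_sum₂_mul, abs_mul]
  gcongr
  calc |∑ i ∈ range (n + 1), x ^ i * y ^ (n + 1 - 1 - i)|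
      ≤ ∑ i ∈ range (n + 1), |x| ^ i * |y| ^ (n - i) := by
        refine (abs_sum_le_sum_abs _ _).trans_eq (sum_congr rfl fun i _ => ?_)
        rw [abs_mul, abs_pow, abs_pow, Nat.add_sub_cancel]
    _ ≤ _ := sum_pow_mul_pow_le (abs_nonneg x) (abs_nonneg y) n

lemma abs_pow_odd_sub_pow_odd_mul_le (x y w : ℝ) (j : ℕ) :
    |(x ^ (2 * j + 1) - y ^ (2 * j + 1)) * w|
      ≤ (2 * j + 1) / 2 * (x ^ (2 * j) * |(x - y) * w| + y ^ (2 * j) * |(x - y) * w|) := by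
  have h := abs_pow_succ_sub_pow_succ_le x y (2 * j)
  rw [(even_two_mul j).pow_abs, (even_two_mul j).pow_abs] at h
  push_cast at h
  calc _ = |x ^ (2 * j + 1) - y ^ (2 * j + 1)| * |w| := abs_mul _ _
    _ ≤ (2 * j + 1) / 2 * (x ^ (2 * j) + y ^ (2 * j)) * |x - y| * |w| := by gcongr
    _ = _ := by rw [abs_mul]; ring

lemma young_inequality_pow_succ {u v : ℝ} (hu : 0 ≤ u) (hv : 0 ≤ v) (n : ℕ) :
    (n + 1) * (u ^ n * v) ≤ n * u ^ (n + 1) + v ^ (n + 1) := by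
  have hn : (0 : ℝ) < n + 1 := by positivity
  have h := Real.geom_mean_le_arith_mean2_weighted (w₁ := n / (n + 1)) (w₂ := 1 / (n + 1))
    (by positivity) (by positivity) (pow_nonneg hu (n + 1)) (pow_nonneg hv (n + 1))
    (by field_simp)
  rw [← Real.rpow_natCast_mul hu, ← Real.rpow_natCast_mul hv] at h
  push_cast at h
  rw [mul_div_cancel₀ _ hn.ne', mul_one_div_cancel hn.ne', Real.rpow_natCast, Real.rpow_one] at h
  calc (n + 1) * (u ^ n * v)
      ≤ (n + 1) * (n / (n + 1) * u ^ (n + 1) + 1 / (n + 1) * v ^ (n + 1)) := by gcongr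
    _ = n * u ^ (n + 1) + v ^ (n + 1) := by field_simp

lemma integral_pow_mul_le_young {α : Type*} [MeasurableSpace α] {μ : Measure α}
    {A B : α → ℝ} (hA : 0 ≤ᵐ[μ] A) (hB : 0 ≤ᵐ[μ] B) {n : ℕ}
    (hAi : Integrable (fun x => A x ^ (n + 1)) μ)
    (hBi : Integrable (fun x => B x ^ (n + 1)) μ) {c : ℝ} (hc : 0 ≤ c) :
    (n + 1) * c * ∫ x, A x ^ n * B x ∂μ
      ≤ n * ∫ x, A x ^ (n + 1) ∂μ + c ^ (n + 1) * ∫ x, B x ^ (n + 1) ∂μ := by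
  rw [← integral_const_mul, ← integral_const_mul, ← integral_const_mul,
    ← integral_add (hAi.const_mul _) (hBi.const_mul _)]
  refine integral_mono_of_nonneg ?_ ((hAi.const_mul _).add (hBi.const_mul _)) ?_
  · filter_upwards [hA, hB] with x hAx hBx
    exact mul_nonneg (by positivity) (mul_nonneg (pow_nonneg hAx n) hBx)
  · filter_upwards [hA, hB] with x hAx hBx
    have h := young_inequality_pow_succ hAx (mul_nonneg hc hBx) n
    rw [mul_pow] at h
    linarith

lemma integral_mul_condExp {Ω : Type*} {m m₀ : MeasurableSpace Ω} {μ : Measure Ω}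
    (hm : m ≤ m₀) [SigmaFinite (μ.trim hm)] {Y W : Ω → ℝ} (hY : StronglyMeasurable[m] Y)
    (hYW : Integrable (Y * W) μ) (hW : Integrable W μ) :
    ∫ ω, Y ω * μ[W | m] ω ∂μ = ∫ ω, Y ω * W ω ∂μ := by
  calc _ = ∫ ω, μ[Y * W | m] ω ∂μ :=
        integral_congr_ae (condExp_mul_of_stronglyMeasurable_left hY hYW hW).symm
    _ = _ := integral_condExp hm

lemma integrable_pow_mul_pow_mul {Ω : Type*} [MeasurableSpace Ω] {μ : Measure Ω}
    {a b W : Ω → ℝ} (ha : AEStronglyMeasurable a μ) (hb : AEStronglyMeasurable b μ)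
    (ha_mom : ∀ n : ℕ, Integrable (fun ω => a ω ^ n) μ)
    (hb_mom : ∀ n : ℕ, Integrable (fun ω => b ω ^ n) μ) (hW : MemLp W 2 μ) (i j : ℕ) :
    Integrable (fun ω => a ω ^ i * b ω ^ j * W ω) μ := by
  have hab : MemLp (fun ω => a ω ^ i * b ω ^ j) 2 μ := by
    refine (memLp_two_iff_integrable_sq ((ha.pow i).mul (hb.pow j))).2 <|
      ((ha_mom (4 * i)).add (hb_mom (4 * j))).mono' (((ha.pow i).mul (hb.pow j)).pow 2)
        (ae_of_all _ fun ω => ?_)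
    simp only [Pi.mul_apply, Pi.add_apply, Pi.pow_apply, Real.norm_eq_abs, abs_pow, sq_abs]
    rw [pow_mul', pow_mul']
    nlinarith [sq_nonneg ((a ω ^ i) ^ 2 - (b ω ^ j) ^ 2), sq_nonneg (a ω ^ i * b ω ^ j)]
  exact hab.integrable_mul hW

section ExchangeablePair

variable {Ω 𝒳 : Type*} [MeasurableSpace Ω] [MeasurableSpace 𝒳] {P : Measure Ω}
  {X X' : Ω → 𝒳} {F : 𝒳 → 𝒳 → ℝ} {g : 𝒳 → ℝ}

lemma integrable_pow_mul_pow_mul_of_integrable_exp (hX : Measurable X) (hX' : Measurable X')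
    (hid : IdentDistrib (fun ω => (X ω, X' ω)) (fun ω => (X' ω, X ω)) P P)
    {f : 𝒳 → ℝ} (hf : Measurable f)
    (hmgf : ∀ t : ℝ, Integrable (fun ω => Real.exp (t * f (X ω))) P)
    (hFmeas : Measurable fun p : 𝒳 × 𝒳 => F p.1 p.2)
    (hFL2 : Integrable (fun ω => F (X ω) (X' ω) ^ 2) P) (i j : ℕ) :
    Integrable (fun ω => f (X ω) ^ i * f (X' ω) ^ j * F (X ω) (X' ω)) P := by
  have hexp : integrableExpSet (fun ω => f (X ω)) P = Set.univ := Set.eq_univ_of_forall hmgf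
  have hmomX (n : ℕ) : Integrable (fun ω => f (X ω) ^ n) P :=
    integrable_pow_of_mem_interior_integrableExpSet (by simp [hexp]) n
  have hmomX' (n : ℕ) : Integrable (fun ω => f (X' ω) ^ n) P :=
    ((hid.comp measurable_fst).comp (hf.pow_const n)).integrable_iff.1 (hmomX n)
  exact integrable_pow_mul_pow_mul (hf.comp hX).aestronglyMeasurable
    (hf.comp hX').aestronglyMeasurable hmomX hmomX'
    ((memLp_two_iff_integrable_sq (hFmeas.comp (hX.prodMk hX')).aestronglyMeasurable).2 hFL2)
    i j

lemma identDistrib_mul_of_antisymm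
    (hid : IdentDistrib (fun ω => (X ω, X' ω)) (fun ω => (X' ω, X ω)) P P)
    (hFmeas : Measurable fun p : 𝒳 × 𝒳 => F p.1 p.2) (hFanti : ∀ x y, F x y = -F y x)
    (hg : Measurable g) :
    IdentDistrib (fun ω => g (X ω) * F (X ω) (X' ω))
      (fun ω => -(g (X' ω) * F (X ω) (X' ω))) P P := by
  have hneg : (fun ω => -(g (X' ω) * F (X ω) (X' ω)))
      = fun ω => g (X' ω) * F (X' ω) (X ω) := by
    funext ω
    rw [hFanti (X ω), mul_neg, neg_neg]
  rw [hneg]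
  exact hid.comp ((hg.comp measurable_fst).mul hFmeas)

lemma identDistrib_mul_of_symm
    (hid : IdentDistrib (fun ω => (X ω, X' ω)) (fun ω => (X' ω, X ω)) P P)
    (hFmeas : Measurable fun p : 𝒳 × 𝒳 => F p.1 p.2) (hFsymm : ∀ x y, F x y = F y x)
    (hg : Measurable g) :
    IdentDistrib (fun ω => g (X' ω) * F (X ω) (X' ω))
      (fun ω => g (X ω) * F (X ω) (X' ω)) P P := by
  have hswap : (fun ω => g (X' ω) * F (X ω) (X' ω))
      = fun ω => g (X' ω) * F (X' ω) (X ω) := by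
    funext ω
    rw [hFsymm (X ω)]
  rw [hswap]
  exact (hid.comp ((hg.comp measurable_fst).mul hFmeas)).symm

lemma integral_mul_of_antisymm_eq_half_integral_sub
    (hid : IdentDistrib (fun ω => (X ω, X' ω)) (fun ω => (X' ω, X ω)) P P)
    (hFmeas : Measurable fun p : 𝒳 × 𝒳 => F p.1 p.2) (hFanti : ∀ x y, F x y = -F y x)
    (hg : Measurable g) (hgX : Integrable (fun ω => g (X ω) * F (X ω) (X' ω)) P) :
    ∫ ω, g (X ω) * F (X ω) (X' ω) ∂P
      = 1 / 2 * ∫ ω, (g (X ω) - g (X' ω)) * F (X ω) (X' ω) ∂P := by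
  have hswap := identDistrib_mul_of_antisymm hid hFmeas hFanti hg
  have hgX' : Integrable (fun ω => g (X' ω) * F (X ω) (X' ω)) P := by
    simpa using (hswap.integrable_iff.1 hgX).neg
  simp_rw [sub_mul]
  rw [integral_sub hgX hgX', hswap.integral_eq, integral_neg]
  ring

lemma integral_pow_odd_mul_le [IsFiniteMeasure P] (hX : Measurable X)
    (hid : IdentDistrib (fun ω => (X ω, X' ω)) (fun ω => (X' ω, X ω)) P P)
    {f : 𝒳 → ℝ} (hf : Measurable f) (hFmeas : Measurable fun p : 𝒳 × 𝒳 => F p.1 p.2)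
    (hFanti : ∀ x y, F x y = -F y x)
    (hmom : ∀ i j : ℕ, Integrable (fun ω => f (X ω) ^ i * f (X' ω) ^ j * F (X ω) (X' ω)) P)
    {V : Ω → ℝ} (hV : V = fun ω => (1 / 2 : ℝ) *
      P[fun ω' => |(f (X ω') - f (X' ω')) * F (X ω') (X' ω')| |
        MeasurableSpace.comap X inferInstance] ω)
    (j : ℕ) :
    ∫ ω, f (X ω) ^ (2 * j + 1) * F (X ω) (X' ω) ∂P
      ≤ (2 * j + 1) * ∫ ω, f (X ω) ^ (2 * j) * V ω ∂P := by
  subst hV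
  have hXdiff (i : ℕ) :
      Integrable (fun ω => f (X ω) ^ (2 * i) * |(f (X ω) - f (X' ω)) * F (X ω) (X' ω)|) P :=
    ((hmom (2 * i + 1) 0).sub (hmom (2 * i) 1)).abs.congr (ae_of_all _ fun ω => by
      simp only [Pi.sub_apply]
      conv_rhs => rw [← abs_of_nonneg ((even_two_mul i).pow_nonneg (f (X ω))), ← abs_mul]
      congr 1
      ring)
  have hdiff : Integrable (fun ω => |(f (X ω) - f (X' ω)) * F (X ω) (X' ω)|) P := by
    simpa using hXdiff 0
  have hswap := identDistrib_mul_of_symm hid (F := fun x y => |(f x - f y) * F x y|)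
    (((hf.comp measurable_fst).sub (hf.comp measurable_snd)).mul hFmeas).abs
    (fun x y => by rw [hFanti x y, abs_mul, abs_mul, abs_neg, abs_sub_comm])
    (hf.pow_const (2 * j))
  have hX'diff := hswap.integrable_iff.2 (hXdiff j)
  calc ∫ ω, f (X ω) ^ (2 * j + 1) * F (X ω) (X' ω) ∂P
      = 1 / 2 *
          ∫ ω, (f (X ω) ^ (2 * j + 1) - f (X' ω) ^ (2 * j + 1)) * F (X ω) (X' ω) ∂P :=
        integral_mul_of_antisymm_eq_half_integral_sub hid hFmeas hFanti (hf.pow_const _)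
          (by simpa using hmom (2 * j + 1) 0)
    _ ≤ 1 / 2 * ∫ ω, (2 * j + 1) / 2 *
          (f (X ω) ^ (2 * j) * |(f (X ω) - f (X' ω)) * F (X ω) (X' ω)|
            + f (X' ω) ^ (2 * j) * |(f (X ω) - f (X' ω)) * F (X ω) (X' ω)|) ∂P := by
        gcongr 1 / 2 * ?_
        exact (le_abs_self _).trans <| abs_integral_le_integral_abs.trans <|
          integral_mono_of_nonneg (ae_of_all _ fun _ => abs_nonneg _)
            (((hXdiff j).add hX'diff).const_mul _)
            (ae_of_all _ fun ω => abs_pow_odd_sub_pow_odd_mul_le _ _ _ j)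
    _ = (2 * j + 1) * ∫ ω, f (X ω) ^ (2 * j) * ((1 / 2 : ℝ) *
          P[fun ω' => |(f (X ω') - f (X' ω')) * F (X ω') (X' ω')| |
            MeasurableSpace.comap X inferInstance] ω) ∂P := by
        rw [integral_const_mul, integral_add (hXdiff j) hX'diff, hswap.integral_eq]
        simp_rw [mul_left_comm _ (1 / 2 : ℝ)]
        rw [integral_const_mul, integral_mul_condExp (Y := fun ω => f (X ω) ^ (2 * j)) hX.comap_le
          ((hf.comp (comap_measurable X)).pow_const _).stronglyMeasurable (hXdiff j) hdiff]
        ring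

lemma integral_pow_le_mul_integral_pow_mul [IsFiniteMeasure P] (hX : Measurable X)
    (hid : IdentDistrib (fun ω => (X ω, X' ω)) (fun ω => (X' ω, X ω)) P P)
    {f : 𝒳 → ℝ} (hf : Measurable f) (hFmeas : Measurable fun p : 𝒳 × 𝒳 => F p.1 p.2)
    (hFanti : ∀ x y, F x y = -F y x)
    (hFcond : P[fun ω => F (X ω) (X' ω) | MeasurableSpace.comap X inferInstance]
      =ᵐ[P] fun ω => f (X ω))
    (hmom : ∀ i j : ℕ, Integrable (fun ω => f (X ω) ^ i * f (X' ω) ^ j * F (X ω) (X' ω)) P)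
    {V : Ω → ℝ} (hV : V = fun ω => (1 / 2 : ℝ) *
      P[fun ω' => |(f (X ω') - f (X' ω')) * F (X ω') (X' ω')| |
        MeasurableSpace.comap X inferInstance] ω)
    (j : ℕ) :
    ∫ ω, f (X ω) ^ (2 * (j + 1)) ∂P
      ≤ (2 * j + 1) * ∫ ω, f (X ω) ^ (2 * j) * V ω ∂P := by
  have hXW : Integrable (fun ω => f (X ω) ^ (2 * j + 1) * F (X ω) (X' ω)) P := by
    simpa using hmom (2 * j + 1) 0
  calc ∫ ω, f (X ω) ^ (2 * (j + 1)) ∂P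
      = ∫ ω, f (X ω) ^ (2 * j + 1) * f (X ω) ∂P :=
        integral_congr_ae (ae_of_all _ fun ω => by dsimp only; ring)
    _ = ∫ ω, f (X ω) ^ (2 * j + 1) *
          P[fun ω => F (X ω) (X' ω) | MeasurableSpace.comap X inferInstance] ω ∂P :=
        integral_congr_ae (hFcond.mono fun ω h => congrArg _ h.symm)
    _ = ∫ ω, f (X ω) ^ (2 * j + 1) * F (X ω) (X' ω) ∂P :=
        integral_mul_condExp hX.comap_le
          ((hf.comp (comap_measurable X)).pow_const _).stronglyMeasurable hXW
          (by simpa using hmom 0 0)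
    _ ≤ _ := integral_pow_odd_mul_le hX hid hf hFmeas hFanti hmom hV j

end ExchangeablePair

theorem chatterjee_fourth_lemma_general
    {Ω 𝒳 : Type*} [MeasurableSpace Ω] [MeasurableSpace 𝒳]
    (P : Measure Ω) [IsProbabilityMeasure P]
    (X X' : Ω → 𝒳) (hX : Measurable X) (hX' : Measurable X')
    (hexch : P.map (fun ω => (X ω, X' ω)) = P.map (fun ω => (X' ω, X ω)))
    (f : 𝒳 → ℝ) (hf : Measurable f)
    (hmgf : ∀ t : ℝ, Integrable (fun ω => Real.exp (t * f (X ω))) P)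
    (F : 𝒳 → 𝒳 → ℝ) (hFmeas : Measurable fun p : 𝒳 × 𝒳 => F p.1 p.2)
    (hFanti : ∀ x y, F x y = -F y x)
    (hFL2 : Integrable (fun ω => (F (X ω) (X' ω)) ^ 2) P)
    (hFcond : MeasureTheory.condExp (MeasurableSpace.comap X inferInstance) P
        (fun ω => F (X ω) (X' ω)) =ᵐ[P] fun ω => f (X ω))
    (V : Ω → ℝ)
    (hV : V = fun ω => (1 / 2 : ℝ) *
      (MeasureTheory.condExp (MeasurableSpace.comap X inferInstance) P
        (fun ω' => |(f (X ω') - f (X' ω')) * F (X ω') (X' ω')|) ω))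
    :
    ∀ k : ℕ, 0 < k →
      Integrable (fun ω => (f (X ω)) ^ (2 * k)) P →
      Integrable (fun ω => (V ω) ^ k) P →
      ∫ ω, (f (X ω)) ^ (2 * k) ∂P
        ≤ (2 * (k : ℝ) - 1) ^ k * ∫ ω, (V ω) ^ k ∂P := by
  intro k hk hfk hVk
  obtain ⟨j, rfl⟩ : ∃ j, k = j + 1 := ⟨k - 1, by omega⟩
  have hid : IdentDistrib (fun ω => (X ω, X' ω)) (fun ω => (X' ω, X ω)) P P :=
    ⟨(hX.prodMk hX').aemeasurable, (hX'.prodMk hX).aemeasurable, hexch⟩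
  have hmom := integrable_pow_mul_pow_mul_of_integrable_exp hX hX' hid hf hmgf hFmeas hFL2
  have hVnn : 0 ≤ᵐ[P] V := by
    filter_upwards [condExp_nonneg (m := MeasurableSpace.comap X inferInstance) (μ := P)
      (ae_of_all _ fun ω => abs_nonneg ((f (X ω) - f (X' ω)) * F (X ω) (X' ω)))] with ω hω
    rw [hV]
    exact mul_nonneg (by norm_num) hω
  have hyoung := integral_pow_mul_le_young (A := fun ω => f (X ω) ^ 2)
    (ae_of_all _ fun ω => sq_nonneg _) hVnn (by simpa only [← pow_mul] using hfk) hVk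
    (c := 2 * j + 1) (by positivity)
  simp only [← pow_mul] at hyoung
  have hkey := integral_pow_le_mul_integral_pow_mul hX hid hf hFmeas hFanti hFcond hmom hV j
  have hkey' := mul_le_mul_of_nonneg_left hkey (by positivity : (0 : ℝ) ≤ j + 1)
  rw [Nat.cast_add_one, show 2 * ((j : ℝ) + 1) - 1 = 2 * j + 1 by ring]
  linarith

theorem chatterjee_fourth_lemma
    {Ω 𝒳 : Type*} [MeasurableSpace Ω] [MeasurableSpace 𝒳]
    (P : Measure Ω) [IsProbabilityMeasure P]
    (X X' : Ω → 𝒳) (hX : Measurable X) (hX' : Measurable X')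
    (hexch : P.map (fun ω => (X ω, X' ω)) = P.map (fun ω => (X' ω, X ω)))
    (f : 𝒳 → ℝ) (hf : Measurable f)
    (hmean : ∫ ω, f (X ω) ∂P = 0)
    (hL2 : Integrable (fun ω => (f (X ω)) ^ 2) P)
    (hmgf : ∀ t : ℝ, Integrable (fun ω => Real.exp (t * f (X ω))) P)
    (F : 𝒳 → 𝒳 → ℝ) (hFmeas : Measurable fun p : 𝒳 × 𝒳 => F p.1 p.2)
    (hFanti : ∀ x y, F x y = -F y x)
    (hFL2 : Integrable (fun ω => (F (X ω) (X' ω)) ^ 2) P)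
    (hFcond : MeasureTheory.condExp (MeasurableSpace.comap X inferInstance) P
        (fun ω => F (X ω) (X' ω)) =ᵐ[P] fun ω => f (X ω))
    (V : Ω → ℝ)
    (hV : V = fun ω => (1 / 2 : ℝ) *
      (MeasureTheory.condExp (MeasurableSpace.comap X inferInstance) P
        (fun ω' => |(f (X ω') - f (X' ω')) * F (X ω') (X' ω')|) ω))
    :
    ∀ k : ℕ, 0 < k →
      Integrable (fun ω => (f (X ω)) ^ (2 * k)) P →
      Integrable (fun ω => (V ω) ^ k) P →
      ∫ ω, (f (X ω)) ^ (2 * k) ∂P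
        ≤ (2 * (k : ℝ) - 1) ^ k * ∫ ω, (V ω) ^ k ∂P :=
  chatterjee_fourth_lemma_general P X X' hX hX' hexch f hf hmgf F hFmeas hFanti hFL2 hFcond V hV
end

section
/- Combinatorial Hoeffding inequality (version I): for every N ≥ 1, every real N×N matrix A = (a_{i,j}) with normalized matrix D = (d_{i,j}), and every t ≥ 0, the combinatorial sum Y = Σ_{i=1}^N a_{i,π(i)} for a uniform random permutation π of [N] satisfies P( Y − E[Y] ≥ t ) ≤ exp( −t² / (4 N B_A² + 4 σ_A²) ), where B_A = max_{i,j} |d_{i,j}| and σ_A² = (N−1)⁻¹ Σ_{i,j} d_{i,j}². -/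
open Finset
open scoped Classical

/-- Normalized matrix `d_{i,j} = a_{i,j} − N⁻¹Σ_k a_{k,j} − N⁻¹Σ_ℓ a_{i,ℓ} + N⁻²Σ_{k,ℓ} a_{k,ℓ}`. -/
noncomputable def dmat (N : ℕ) (a : Fin N → Fin N → ℝ) (i j : Fin N) : ℝ :=
  a i j - (∑ k, a k j) / (N : ℝ) - (∑ l, a i l) / (N : ℝ) + (∑ k, ∑ l, a k l) / ((N : ℝ) ^ 2)

/-- `μ_A = E[Y] = N⁻¹ Σ_{i,j} a_{i,j}`. -/
noncomputable def muA (N : ℕ) (a : Fin N → Fin N → ℝ) : ℝ :=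
  (∑ i, ∑ j, a i j) / (N : ℝ)

/-- `σ_A² = (N−1)⁻¹ Σ_{i,j} d_{i,j}²`. -/
noncomputable def sigmaA2 (N : ℕ) (a : Fin N → Fin N → ℝ) : ℝ :=
  (∑ i, ∑ j, (dmat N a i j) ^ 2) / ((N : ℝ) - 1)

/-- `B_A = max_{i,j∈[N]} |d_{i,j}|`. -/
noncomputable def BA (N : ℕ) (a : Fin N → Fin N → ℝ) : ℝ :=
  ⨆ i : Fin N, ⨆ j : Fin N, |dmat N a i j|

/-- The combinatorial sum `Y(π) = Σ_{i=1}^N a_{i,π(i)}`. -/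
noncomputable def combSum (N : ℕ) (a : Fin N → Fin N → ℝ) (π : Equiv.Perm (Fin N)) : ℝ :=
  ∑ i, a i (π i)

/-- Probability of an event under the uniform random permutation of `[N]`. -/
noncomputable def permProb (N : ℕ) (p : Equiv.Perm (Fin N) → Prop) : ℝ :=
  (∑ π : Equiv.Perm (Fin N), if p π then (1 : ℝ) else 0) / (Nat.factorial N : ℝ)

/-!
Write `S(π) = Σᵢ d_{i,π(i)}`, which equals `Y − E[Y]`. Replacing `π` by `π ∘ (i j)` lowers `S` by
`Δᵢⱼ(π) = d_{i,π(i)} + d_{j,π(j)} − d_{i,π(j)} − d_{j,π(i)}` and negates `Δᵢⱼ`, while the zero row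
and column sums of `D` give `Σᵢⱼ Δᵢⱼ = 2N S` (Chatterjee's exchangeable pair). Together with
`(x − y)(eˣ − eʸ) ≤ (x − y)²(eˣ + eʸ)/2` this bounds the moment generating function
`m(λ) = Σ_π e^{λ S(π)}` by `m'(λ) ≤ C λ m(λ)` with `C = 2N B_A² + 2σ_A²`, hence
`m(λ) ≤ N! e^{Cλ²/2}`, and the Chernoff bound at `λ = t / C` gives the claim.
-/

open Equiv

section ExpBounds

open Real

lemma exp_sub_one_le_mul_exp_add_one {u : ℝ} (hu : 0 ≤ u) :
    exp u - 1 ≤ u * (exp u + 1) / 2 := by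
  let g : ℝ → ℝ := fun v => v * (exp v + 1) / 2 - (exp v - 1)
  have hg : ∀ v, HasDerivAt g ((v * exp v - exp v + 1) / 2) v := fun v =>
    ((((hasDerivAt_id v).mul ((hasDerivAt_exp v).add_const 1)).div_const 2).sub
      ((hasDerivAt_exp v).sub_const 1)).congr_deriv (by simp; ring)
  -- `(1 - v) eᵛ ≤ e⁻ᵛ eᵛ = 1`
  have hg' : ∀ v, 0 ≤ (v * exp v - exp v + 1) / 2 := fun v => by
    have := mul_le_mul_of_nonneg_right (add_one_le_exp (-v)) (exp_pos v).le
    rw [← exp_add, neg_add_cancel, exp_zero] at this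
    linarith
  have hmono : Monotone g :=
    monotone_of_deriv_nonneg (fun v => (hg v).differentiableAt) fun v => (hg v).deriv ▸ hg' v
  simpa [g] using hmono hu

lemma sub_mul_exp_sub_exp_le {l : ℝ} (hl : 0 ≤ l) (x y : ℝ) :
    (x - y) * (exp (l * x) - exp (l * y))
      ≤ l * (x - y) ^ 2 * (exp (l * x) + exp (l * y)) / 2 := by
  wlog hyx : y ≤ x generalizing x y
  · linear_combination this y x (le_of_not_ge hyx)
  have hx : exp (l * x) = exp (l * (x - y)) * exp (l * y) := by rw [← exp_add]; ring_nf
  have := mul_le_mul_of_nonneg_left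
    (exp_sub_one_le_mul_exp_add_one (mul_nonneg hl (sub_nonneg.2 hyx)))
    (mul_nonneg (sub_nonneg.2 hyx) (exp_pos (l * y)).le)
  rw [hx]
  linear_combination this

lemma sum_mul_exp_le_of_exchange {α : Type*} [Fintype α] (σ : α ≃ α) {f F : α → ℝ}
    (hf : ∀ x, f (σ x) = f x - F x) (hF : ∀ x, F (σ x) = -F x) {l : ℝ} (hl : 0 ≤ l) :
    ∑ x, F x * exp (l * f x) ≤ l / 2 * ∑ x, F x ^ 2 * exp (l * f x) := by
  have hreflect : ∑ x, F x * exp (l * (f x - F x)) = -∑ x, F x * exp (l * f x) := by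
    rw [← σ.sum_comp (fun x => F x * exp (l * f x)), ← sum_neg_distrib]
    simp only [hf, hF, neg_mul, neg_neg]
  have hreflect_sq : ∑ x, F x ^ 2 * exp (l * (f x - F x)) = ∑ x, F x ^ 2 * exp (l * f x) := by
    rw [← σ.sum_comp (fun x => F x ^ 2 * exp (l * f x))]
    simp only [hf, hF, neg_sq]
  have hpair : ∀ x, F x * exp (l * f x) - F x * exp (l * (f x - F x))
      ≤ l / 2 * (F x ^ 2 * exp (l * f x)) + l / 2 * (F x ^ 2 * exp (l * (f x - F x))) := by
    intro x
    have := sub_mul_exp_sub_exp_le hl (f x) (f x - F x)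
    rw [sub_sub_cancel] at this
    linear_combination this
  have := sum_le_sum fun x (_ : x ∈ univ) => hpair x
  rw [sum_sub_distrib, sum_add_distrib, ← mul_sum, ← mul_sum, hreflect, hreflect_sq] at this
  linarith

lemma le_mul_exp_of_hasDerivAt_le {m m' : ℝ → ℝ} {C l : ℝ} (hm : ∀ u, HasDerivAt m (m' u) u)
    (hm' : ∀ u, 0 < u → m' u ≤ C * u * m u) (hl : 0 ≤ l) :
    m l ≤ m 0 * exp (C * l ^ 2 / 2) := by
  let g u := m u * exp (-(C * u ^ 2 / 2))
  have hg : ∀ u, HasDerivAt g ((m' u - C * u * m u) * exp (-(C * u ^ 2 / 2))) u := fun u =>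
    ((hm u).mul ((((hasDerivAt_pow 2 u).const_mul C).div_const 2).neg.exp)).congr_deriv
      (by simp only [Pi.neg_apply]; push_cast; ring)
  have hanti : AntitoneOn g (Set.Ici 0) := by
    refine antitoneOn_of_deriv_nonpos (convex_Ici 0)
      (fun u _ => (hg u).continuousAt.continuousWithinAt)
      (fun u _ => (hg u).differentiableAt.differentiableWithinAt) fun u hu => ?_
    rw [interior_Ici] at hu
    rw [(hg u).deriv]
    exact mul_nonpos_of_nonpos_of_nonneg (sub_nonpos.2 (hm' u hu)) (exp_pos _).le
  have := hanti Set.self_mem_Ici hl hl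
  calc m l = g l * exp (C * l ^ 2 / 2) := by
        simp only [g, mul_assoc, ← exp_add, neg_add_cancel, exp_zero, mul_one]
    _ ≤ m 0 * exp (C * l ^ 2 / 2) := by gcongr; simpa [g] using this

lemma sum_ite_le_card_mul_exp {α : Type*} [Fintype α] (f : α → ℝ) {C t : ℝ}
    (hmgf : ∀ l, 0 ≤ l → ∑ x, exp (l * f x) ≤ Fintype.card α * exp (C * l ^ 2 / 2))
    (ht : 0 ≤ t) :
    (∑ x, if t ≤ f x then (1 : ℝ) else 0) ≤ Fintype.card α * exp (-t ^ 2 / (2 * C)) := by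
  rcases le_or_gt C 0 with hC | hC
  · calc (∑ x, if t ≤ f x then (1 : ℝ) else 0) ≤ ∑ _x : α, (1 : ℝ) :=
          sum_le_sum fun x _ => by split_ifs <;> norm_num
      _ ≤ Fintype.card α * exp (-t ^ 2 / (2 * C)) := by
          rw [sum_const, card_univ, nsmul_one]
          exact le_mul_of_one_le_right (by positivity)
            (one_le_exp (div_nonneg_of_nonpos (by nlinarith) (by linarith)))
  · set l := t / C
    have hl : 0 ≤ l := div_nonneg ht hC.le
    have hmarkov : ∀ x, (if t ≤ f x then (1 : ℝ) else 0) ≤ exp (-(l * t)) * exp (l * f x) := by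
      intro x
      rw [← exp_add]
      split_ifs with h
      · exact one_le_exp (by nlinarith)
      · exact (exp_pos _).le
    calc (∑ x, if t ≤ f x then (1 : ℝ) else 0) ≤ exp (-(l * t)) * ∑ x, exp (l * f x) := by
          rw [mul_sum]; exact sum_le_sum fun x _ => hmarkov x
      _ ≤ exp (-(l * t)) * (Fintype.card α * exp (C * l ^ 2 / 2)) := by gcongr; exact hmgf l hl
      _ = Fintype.card α * exp (-t ^ 2 / (2 * C)) := by
          rw [mul_left_comm, ← exp_add]
          congr 2
          simp only [l]
          field_simp
          ring

end ExpBounds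

section PermSum

variable {ι : Type*} (d : ι → ι → ℝ)

def permSum [Fintype ι] (π : Perm ι) : ℝ := ∑ i, d i (π i)

def swapDelta (π : Perm ι) (i j : ι) : ℝ := d i (π i) + d j (π j) - d i (π j) - d j (π i)

lemma permSum_mul_swap [Fintype ι] [DecidableEq ι] (π : Perm ι) (i j : ι) :
    permSum d (π * swap i j) = permSum d π - swapDelta d π i j := by
  rcases eq_or_ne i j with rfl | hij
  · simp [swapDelta, ← Perm.one_def]
  have hchange : ∑ x, (d x ((π * swap i j) x) - d x (π x)) = -swapDelta d π i j := by
    rw [Fintype.sum_eq_add i j hij fun x hx => by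
      simp [Perm.mul_apply, swap_apply_of_ne_of_ne hx.1 hx.2]]
    simp only [Perm.mul_apply, swap_apply_left, swap_apply_right, swapDelta]
    ring
  rw [sum_sub_distrib] at hchange
  rw [permSum, permSum]
  linarith

lemma swapDelta_mul_swap [DecidableEq ι] (π : Perm ι) (i j : ι) :
    swapDelta d (π * swap i j) i j = -swapDelta d π i j := by
  simp only [swapDelta, Perm.mul_apply, swap_apply_left, swap_apply_right]
  ring

lemma sum_sum_swapDelta [Fintype ι] (hrow : ∀ i, ∑ j, d i j = 0) (hcol : ∀ j, ∑ i, d i j = 0)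
    (π : Perm ι) :
    ∑ i, ∑ j, swapDelta d π i j = 2 * Fintype.card ι * permSum d π := by
  have hrow_π : ∀ i, ∑ j, d i (π j) = 0 := fun i => (Equiv.sum_comp π (d i)).trans (hrow i)
  simp only [swapDelta, sum_sub_distrib, sum_add_distrib, sum_const, card_univ, nsmul_eq_mul,
    hrow_π, hcol, ← mul_sum, permSum]
  ring

lemma sum_sum_swapDelta_sq_le [Fintype ι] (π : Perm ι) :
    ∑ i, ∑ j, swapDelta d π i j ^ 2
      ≤ 8 * (Fintype.card ι * ∑ i, d i (π i) ^ 2 + ∑ i, ∑ j, d i j ^ 2) := by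
  have hpoint : ∀ i j, swapDelta d π i j ^ 2
      ≤ 4 * (d i (π i) ^ 2 + d j (π j) ^ 2 + d i (π j) ^ 2 + d j (π i) ^ 2) := fun i j => by
    rw [swapDelta]
    nlinarith [sq_nonneg (d i (π i) - d j (π j)), sq_nonneg (d i (π i) + d i (π j)),
      sq_nonneg (d i (π i) + d j (π i)), sq_nonneg (d j (π j) + d i (π j)),
      sq_nonneg (d j (π j) + d j (π i)), sq_nonneg (d i (π j) - d j (π i))]
  refine (sum_le_sum fun i _ => sum_le_sum fun j _ => hpoint i j).trans_eq ?_
  have hrow_π : ∀ i, ∑ j, d i (π j) ^ 2 = ∑ j, d i j ^ 2 := fun i => Equiv.sum_comp π (d i · ^ 2)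
  have hcol_π : ∑ i, ∑ j, d j (π i) ^ 2 = ∑ i, ∑ j, d i j ^ 2 := by
    rw [sum_comm]; exact sum_congr rfl fun j _ => hrow_π j
  simp only [← mul_sum, sum_add_distrib, sum_const, card_univ, nsmul_eq_mul, hrow_π, hcol_π]
  ring

lemma sum_permSum_mul_exp_le [Fintype ι] [DecidableEq ι] [Nonempty ι] (hrow : ∀ i, ∑ j, d i j = 0)
    (hcol : ∀ j, ∑ i, d i j = 0) {B s : ℝ} (hB : ∀ i j, |d i j| ≤ B)
    (hs : ∑ i, ∑ j, d i j ^ 2 ≤ Fintype.card ι * s) {l : ℝ} (hl : 0 ≤ l) :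
    ∑ π : Perm ι, permSum d π * Real.exp (l * permSum d π)
      ≤ (2 * Fintype.card ι * B ^ 2 + 2 * s) * l * ∑ π : Perm ι, Real.exp (l * permSum d π) := by
  set n : ℝ := (Fintype.card ι : ℝ)
  have hexchange : ∀ i j, ∑ π : Perm ι, swapDelta d π i j * Real.exp (l * permSum d π)
      ≤ l / 2 * ∑ π : Perm ι, swapDelta d π i j ^ 2 * Real.exp (l * permSum d π) := fun i j =>
    sum_mul_exp_le_of_exchange (Equiv.mulRight (swap i j)) (fun π => permSum_mul_swap d π i j)
      (fun π => swapDelta_mul_swap d π i j) hl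
  have hsq : ∀ π, ∑ i, ∑ j, swapDelta d π i j ^ 2 ≤ 8 * n * (n * B ^ 2 + s) := fun π => by
    have hdiag : ∑ i, d i (π i) ^ 2 ≤ n * B ^ 2 := by
      calc ∑ i, d i (π i) ^ 2 ≤ ∑ _i : ι, B ^ 2 :=
            sum_le_sum fun i _ => sq_le_sq.2 ((hB i (π i)).trans (le_abs_self B))
        _ = n * B ^ 2 := by rw [sum_const, card_univ, nsmul_eq_mul]
    nlinarith [sum_sum_swapDelta_sq_le d π]
  refine le_of_mul_le_mul_left ?_ (by positivity : 0 < 2 * n)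
  calc 2 * n * ∑ π : Perm ι, permSum d π * Real.exp (l * permSum d π)
      = ∑ π : Perm ι, ∑ i, ∑ j, swapDelta d π i j * Real.exp (l * permSum d π) := by
        simp only [mul_sum, ← sum_mul, sum_sum_swapDelta d hrow hcol, n, mul_assoc]
    _ = ∑ i, ∑ j, ∑ π : Perm ι, swapDelta d π i j * Real.exp (l * permSum d π) := by
        rw [sum_comm]; exact sum_congr rfl fun i _ => sum_comm
    _ ≤ ∑ i, ∑ j, l / 2 * ∑ π : Perm ι, swapDelta d π i j ^ 2 * Real.exp (l * permSum d π) :=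
        sum_le_sum fun i _ => sum_le_sum fun j _ => hexchange i j
    _ = l / 2 * ∑ π : Perm ι, (∑ i, ∑ j, swapDelta d π i j ^ 2) * Real.exp (l * permSum d π) := by
        simp only [← mul_sum, sum_mul]
        rw [eq_comm, sum_comm]; exact congrArg _ (sum_congr rfl fun i _ => sum_comm)
    _ ≤ l / 2 * ∑ π : Perm ι, 8 * n * (n * B ^ 2 + s) * Real.exp (l * permSum d π) := by
        gcongr with π; exact hsq π
    _ = 2 * n * ((2 * n * B ^ 2 + 2 * s) * l * ∑ π : Perm ι, Real.exp (l * permSum d π)) := by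
        rw [← mul_sum]; ring

lemma sum_exp_permSum_le [Fintype ι] [DecidableEq ι] [Nonempty ι] (hrow : ∀ i, ∑ j, d i j = 0)
    (hcol : ∀ j, ∑ i, d i j = 0) {B s : ℝ} (hB : ∀ i j, |d i j| ≤ B)
    (hs : ∑ i, ∑ j, d i j ^ 2 ≤ Fintype.card ι * s) {l : ℝ} (hl : 0 ≤ l) :
    ∑ π : Perm ι, Real.exp (l * permSum d π)
      ≤ Fintype.card (Perm ι) * Real.exp ((2 * Fintype.card ι * B ^ 2 + 2 * s) * l ^ 2 / 2) := by
  have hderiv : ∀ u, HasDerivAt (fun u => ∑ π : Perm ι, Real.exp (u * permSum d π))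
      (∑ π : Perm ι, permSum d π * Real.exp (u * permSum d π)) u := fun u =>
    HasDerivAt.fun_sum fun π _ =>
      ((hasDerivAt_mul_const (permSum d π)).exp).congr_deriv (mul_comm _ _)
  simpa using le_mul_exp_of_hasDerivAt_le hderiv
    (fun u hu => sum_permSum_mul_exp_le d hrow hcol hB hs hu.le) hl

end PermSum

section Normalization

variable {N : ℕ} (a : Fin N → Fin N → ℝ)

lemma sum_dmat_row (i : Fin N) : ∑ j, dmat N a i j = 0 := by
  have hN : (N : ℝ) ≠ 0 := Nat.cast_ne_zero.2 (Fin.pos i).ne'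
  simp only [dmat, sum_add_distrib, sum_sub_distrib, ← sum_div, sum_const, card_univ,
    Fintype.card_fin, nsmul_eq_mul]
  rw [sum_comm]
  field_simp
  ring

lemma sum_dmat_col (j : Fin N) : ∑ i, dmat N a i j = 0 := by
  have hN : (N : ℝ) ≠ 0 := Nat.cast_ne_zero.2 (Fin.pos j).ne'
  simp only [dmat, sum_add_distrib, sum_sub_distrib, ← sum_div, sum_const, card_univ,
    Fintype.card_fin, nsmul_eq_mul]
  field_simp
  ring

lemma permSum_dmat (π : Perm (Fin N)) : permSum (dmat N a) π = combSum N a π - muA N a := by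
  rcases N.eq_zero_or_pos with rfl | hN
  · simp [permSum, combSum, muA]
  have hN : (N : ℝ) ≠ 0 := by positivity
  simp only [permSum, dmat, sum_add_distrib, sum_sub_distrib, ← sum_div, sum_const, card_univ,
    Fintype.card_fin, nsmul_eq_mul, combSum, muA]
  rw [Equiv.sum_comp π (fun j => ∑ k, a k j), sum_comm]
  field_simp
  ring

lemma abs_dmat_le_BA (i j : Fin N) : |dmat N a i j| ≤ BA N a :=
  (le_ciSup (Set.finite_range _).bddAbove j).trans
    (le_ciSup (f := fun i => ⨆ j, |dmat N a i j|) (Set.finite_range _).bddAbove i)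

lemma sum_sq_dmat_le_mul_sigmaA2 : ∑ i, ∑ j, dmat N a i j ^ 2 ≤ N * sigmaA2 N a := by
  rcases N with _ | _ | n
  · simp
  · simp [dmat, sigmaA2]
  · rw [sigmaA2, mul_div_assoc', le_div_iff₀ (by push_cast; linarith)]
    nlinarith [sum_nonneg fun i (_ : i ∈ univ) => sum_nonneg fun j (_ : j ∈ univ) =>
      sq_nonneg (dmat (n + 2) a i j)]

end Normalization

/-- Combinatorial Hoeffding inequality, version I. -/
theorem combinatorial_hoeffding_I
    (N : ℕ) (hN : 1 ≤ N) (a : Fin N → Fin N → ℝ) (t : ℝ) (ht : 0 ≤ t) :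
    permProb N (fun π => t ≤ combSum N a π - muA N a)
      ≤ Real.exp (-(t ^ 2) / (4 * (N : ℝ) * (BA N a) ^ 2 + 4 * sigmaA2 N a)) := by
  have : Nonempty (Fin N) := ⟨⟨0, hN⟩⟩
  have hmgf : ∀ l, 0 ≤ l → ∑ π : Perm (Fin N), Real.exp (l * (combSum N a π - muA N a))
      ≤ Fintype.card (Perm (Fin N))
        * Real.exp ((2 * N * BA N a ^ 2 + 2 * sigmaA2 N a) * l ^ 2 / 2) := fun l hl => by
    simpa only [Fintype.card_fin, permSum_dmat] using
      sum_exp_permSum_le (dmat N a) (sum_dmat_row a) (sum_dmat_col a) (abs_dmat_le_BA a)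
        (by simpa only [Fintype.card_fin] using sum_sq_dmat_le_mul_sigmaA2 a) hl
  have htail := sum_ite_le_card_mul_exp _ hmgf ht
  rw [Fintype.card_perm, Fintype.card_fin] at htail
  have hden : 4 * (N : ℝ) * BA N a ^ 2 + 4 * sigmaA2 N a
      = 2 * (2 * N * BA N a ^ 2 + 2 * sigmaA2 N a) := by ring
  rw [permProb, div_le_iff₀ (by positivity), hden, mul_comm]
  exact htail
end

section
/- Combinatorial Hoeffding inequality (version II, product matrices): let a_1,…,a_N and b_1,…,b_N be real numbers with means ā = N⁻¹Σ_i a_i and b̄ = N⁻¹Σ_j b_j, and let Y = Σ_{i=1}^N a_i b_{π(i)} for a uniform random permutation π of [N]. Define σ̄² = max_{s ∈ S_N} Σ_{i=1}^N (a_i − ā)² (b_{s(i)} − b̄)² (maximum over all permutations s of [N]) and σ² = (N−1)⁻¹ (Σ_{i=1}^N (a_i − ā)²)(Σ_{j=1}^N (b_j − b̄)²). Then for every t ≥ 0: P( Y − E[Y] ≥ t ) ≤ exp( −t² / (4 σ̄² + 4 σ²) ). -/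
open Finset
open scoped Classical

/-
Chatterjee's exchangeable-pair method. After centring, `Y - E Y = F π := ∑ cᵢ d_{π i}`.
Composing `π` with the transposition `(i j)` changes `F` by `(cᵢ - cⱼ)(d_{π i} - d_{π j})`;
summed over all `i, j` these changes add up to `2N F π`, and their squares to at most
`8 (N σ̄² + (N - 1) σ²)`. Pairing `π` with `π (i j)` and using
`(x - y)(eˣ - eʸ) ≤ (x - y)² (eˣ + eʸ) / 2` turns this into the differential inequality
`M'(μ) ≤ μ C M(μ)` for the moment generating function `M` of `F`, with
`C = 2 σ̄² + 2 (N - 1) σ² / N`. Hence `M(μ) ≤ exp (C μ² / 2)` (Herbst's argument), and the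
Chernoff bound at `μ = t / C` gives `exp (-t² / (2C)) ≤ exp (-t² / (4 σ̄² + 4 σ²))`.
-/

namespace Real

theorem exp_sub_one_le_half_mul_exp_add_one {u : ℝ} (hu : 0 ≤ u) :
    exp u - 1 ≤ u / 2 * (exp u + 1) := by
  let f : ℝ → ℝ := fun u => u / 2 * (exp u + 1) - (exp u - 1)
  have hf : ∀ u, HasDerivAt f ((1 + (u - 1) * exp u) / 2) u := fun u => by
    have := (((hasDerivAt_id' u).div_const 2).fun_mul ((hasDerivAt_exp u).add_const 1)).fun_sub
      ((hasDerivAt_exp u).sub_const 1)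
    exact this.congr_deriv (by ring)
  have hmono : MonotoneOn f (Set.Ici 0) := by
    refine monotoneOn_of_deriv_nonneg (convex_Ici 0)
      (fun u _ => (hf u).continuousAt.continuousWithinAt)
      (fun u _ => (hf u).differentiableAt.differentiableWithinAt) fun u _ => ?_
    have h := mul_le_mul_of_nonneg_right (add_one_le_exp (-u)) (exp_pos u).le
    rw [← exp_add, neg_add_cancel, exp_zero] at h
    rw [(hf u).deriv]
    linarith
  have := hmono Set.self_mem_Ici hu hu
  simp only [f, zero_div, zero_mul, exp_zero, sub_self] at this
  linarith

theorem sub_mul_exp_sub_exp_le (x y : ℝ) {μ : ℝ} (hμ : 0 ≤ μ) :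
    (x - y) * (exp (μ * x) - exp (μ * y)) ≤ μ / 2 * (x - y) ^ 2 * (exp (μ * x) + exp (μ * y)) := by
  wlog hxy : y ≤ x generalizing x y
  · convert this y x (le_of_not_ge hxy) using 1 <;> ring
  have hx : exp (μ * x) = exp (μ * y) * exp (μ * (x - y)) := by rw [← exp_add]; ring_nf
  have h := mul_le_mul_of_nonneg_left
    (exp_sub_one_le_half_mul_exp_add_one (mul_nonneg hμ (sub_nonneg.2 hxy)))
    (mul_nonneg (sub_nonneg.2 hxy) (exp_pos (μ * y)).le)
  rw [hx]
  linarith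

end Real

theorem sum_sub_mul_exp_le_of_involutive {α : Type*} [Fintype α] {ψ : α → α}
    (hψ : Function.Involutive ψ) (G : α → ℝ) {μ : ℝ} (hμ : 0 ≤ μ) :
    ∑ x, (G x - G (ψ x)) * Real.exp (μ * G x)
      ≤ μ / 2 * ∑ x, (G x - G (ψ x)) ^ 2 * Real.exp (μ * G x) := by
  have reindex := fun f : α → ℝ => Equiv.sum_comp (hψ.toPerm ψ) f
  simp only [Function.Involutive.coe_toPerm] at reindex
  have hlin := reindex fun x => (G x - G (ψ x)) * Real.exp (μ * G x)
  have hsq := reindex fun x => (G x - G (ψ x)) ^ 2 * Real.exp (μ * G x)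
  simp only [hψ _] at hlin hsq
  refine le_of_mul_le_mul_left ?_ two_pos
  calc 2 * ∑ x, (G x - G (ψ x)) * Real.exp (μ * G x)
      = ∑ x, (G x - G (ψ x)) * (Real.exp (μ * G x) - Real.exp (μ * G (ψ x))) := by
        rw [two_mul]
        nth_rewrite 2 [← hlin]
        rw [← sum_add_distrib]
        exact sum_congr rfl fun x _ => by ring
    _ ≤ ∑ x, μ / 2 * (G x - G (ψ x)) ^ 2 * (Real.exp (μ * G x) + Real.exp (μ * G (ψ x))) :=
        sum_le_sum fun x _ => Real.sub_mul_exp_sub_exp_le (G x) (G (ψ x)) hμ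
    _ = 2 * (μ / 2 * ∑ x, (G x - G (ψ x)) ^ 2 * Real.exp (μ * G x)) := by
        rw [two_mul]
        nth_rewrite 2 [← hsq]
        rw [← mul_add, ← sum_add_distrib, mul_sum]
        exact sum_congr rfl fun x _ => by ring

theorem sum_mul_exp_le_of_sum_sum_swap {ι : Type*} [Fintype ι] [DecidableEq ι] [Nonempty ι]
    (F : Equiv.Perm ι → ℝ)
    (hF : ∀ π, 2 * Fintype.card ι * F π = ∑ i, ∑ j, (F π - F (π * Equiv.swap i j)))
    {B : ℝ} (hB : ∀ π, ∑ i, ∑ j, (F π - F (π * Equiv.swap i j)) ^ 2 ≤ B) {μ : ℝ} (hμ : 0 ≤ μ) :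
    ∑ π, F π * Real.exp (μ * F π) ≤ μ * (B / (4 * Fintype.card ι)) * ∑ π, Real.exp (μ * F π) := by
  have hn : (0 : ℝ) < 2 * Fintype.card ι := by positivity
  refine le_of_mul_le_mul_left ?_ hn
  calc 2 * Fintype.card ι * ∑ π, F π * Real.exp (μ * F π)
      = ∑ i, ∑ j, ∑ π, (F π - F (π * Equiv.swap i j)) * Real.exp (μ * F π) := by
        simp_rw [mul_sum, ← mul_assoc, hF, sum_mul]
        rw [sum_comm]
        exact sum_congr rfl fun i _ => sum_comm
    _ ≤ ∑ i, ∑ j, μ / 2 * ∑ π, (F π - F (π * Equiv.swap i j)) ^ 2 * Real.exp (μ * F π) := by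
        gcongr with i _ j _
        exact sum_sub_mul_exp_le_of_involutive (Equiv.mul_swap_involutive i j) F hμ
    _ = μ / 2 * ∑ π, (∑ i, ∑ j, (F π - F (π * Equiv.swap i j)) ^ 2) * Real.exp (μ * F π) := by
        simp_rw [← mul_sum, sum_mul]
        exact congrArg _ ((sum_congr rfl fun i _ => sum_comm).trans sum_comm)
    _ ≤ μ / 2 * ∑ π, B * Real.exp (μ * F π) := by
        gcongr with π
        exact hB π
    _ = 2 * Fintype.card ι * (μ * (B / (4 * Fintype.card ι)) * ∑ π, Real.exp (μ * F π)) := by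
        rw [← mul_sum]
        field_simp
        ring

theorem le_mul_exp_of_hasDerivAt_le_s11 {f f' : ℝ → ℝ} {C : ℝ}
    (hf : ∀ x, 0 ≤ x → HasDerivAt f (f' x) x) (hf' : ∀ x, 0 < x → f' x ≤ C * x * f x)
    {l : ℝ} (hl : 0 ≤ l) :
    f l ≤ f 0 * Real.exp (C * l ^ 2 / 2) := by
  set g : ℝ → ℝ := fun x => f x * Real.exp (-(C * x ^ 2 / 2))
  have hg : ∀ x, 0 ≤ x →
      HasDerivAt g ((f' x - C * x * f x) * Real.exp (-(C * x ^ 2 / 2))) x := fun x hx => by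
    have := (hf x hx).fun_mul (((hasDerivAt_pow 2 x).const_mul C).div_const 2).fun_neg.exp
    exact this.congr_deriv (by push_cast; ring)
  have hanti : AntitoneOn g (Set.Ici 0) := by
    refine antitoneOn_of_deriv_nonpos (convex_Ici 0)
      (fun x hx => (hg x hx).continuousAt.continuousWithinAt)
      (fun x hx => (hg x (interior_subset hx)).differentiableAt.differentiableWithinAt)
      fun x hx => ?_
    rw [interior_Ici, Set.mem_Ioi] at hx
    rw [(hg x hx.le).deriv]
    exact mul_nonpos_of_nonpos_of_nonneg (sub_nonpos.2 (hf' x hx)) (Real.exp_pos _).le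
  calc f l = g l * Real.exp (C * l ^ 2 / 2) := by
        rw [mul_assoc, ← Real.exp_add, neg_add_cancel, Real.exp_zero, mul_one]
    _ ≤ g 0 * Real.exp (C * l ^ 2 / 2) := by
        gcongr
        exact hanti Set.self_mem_Ici hl hl
    _ = f 0 * Real.exp (C * l ^ 2 / 2) := by simp [g]

theorem sum_exp_le_of_sum_mul_exp_le {α : Type*} [Fintype α] (F : α → ℝ) {C : ℝ}
    (h : ∀ μ, 0 < μ → ∑ x, F x * Real.exp (μ * F x) ≤ μ * C * ∑ x, Real.exp (μ * F x))
    {l : ℝ} (hl : 0 ≤ l) :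
    ∑ x, Real.exp (l * F x) ≤ Fintype.card α * Real.exp (C * l ^ 2 / 2) := by
  have hderiv : ∀ μ, HasDerivAt (fun μ => ∑ x, Real.exp (μ * F x))
      (∑ x, F x * Real.exp (μ * F x)) μ := fun μ => by
    refine HasDerivAt.fun_sum fun x _ => ?_
    exact (((hasDerivAt_id' μ).mul_const (F x)).exp).congr_deriv (by ring)
  have := le_mul_exp_of_hasDerivAt_le_s11 (fun μ _ => hderiv μ)
    (fun μ hμ => (h μ hμ).trans_eq (by ring)) hl
  simpa using this

theorem sum_ite_le_mul_exp_of_sum_exp_le {α : Type*} [Fintype α] (F : α → ℝ) {C : ℝ}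
    (hC : 0 ≤ C)
    (h : ∀ l, 0 ≤ l → ∑ x, Real.exp (l * F x) ≤ Fintype.card α * Real.exp (C * l ^ 2 / 2))
    {t : ℝ} (ht : 0 ≤ t) :
    (∑ x, if t ≤ F x then (1 : ℝ) else 0) ≤ Fintype.card α * Real.exp (-t ^ 2 / (2 * C)) := by
  rcases hC.eq_or_lt with rfl | hC
  · simp only [mul_zero, div_zero, Real.exp_zero, mul_one]
    calc (∑ x, if t ≤ F x then (1 : ℝ) else 0) ≤ ∑ _x : α, (1 : ℝ) :=
          sum_le_sum fun x _ => by split_ifs <;> norm_num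
      _ = Fintype.card α := by simp
  set l := t / C
  have hl : 0 ≤ l := div_nonneg ht hC.le
  have markov : ∀ x,
      (if t ≤ F x then (1 : ℝ) else 0) ≤ Real.exp (-(l * t)) * Real.exp (l * F x) := by
    intro x
    rw [← Real.exp_add]
    split_ifs with hx
    · exact Real.one_le_exp (by nlinarith)
    · exact (Real.exp_pos _).le
  calc (∑ x, if t ≤ F x then (1 : ℝ) else 0)
      ≤ Real.exp (-(l * t)) * ∑ x, Real.exp (l * F x) := by
        rw [mul_sum]
        exact sum_le_sum fun x _ => markov x
    _ ≤ Real.exp (-(l * t)) * (Fintype.card α * Real.exp (C * l ^ 2 / 2)) := by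
        gcongr
        exact h l hl
    _ = Fintype.card α * Real.exp (-t ^ 2 / (2 * C)) := by
        rw [mul_left_comm, ← Real.exp_add]
        congr 2
        simp only [l]
        field_simp
        ring

section CombinatorialSum

variable {ι : Type*} [Fintype ι]

theorem sum_sum_sub_mul_sub {R : Type*} [CommRing R] (f g : ι → R) :
    ∑ i, ∑ j, (f i - f j) * (g i - g j)
      = 2 * (Fintype.card ι * ∑ i, f i * g i - (∑ i, f i) * ∑ i, g i) := by
  simp only [sub_mul, mul_sub, sum_sub_distrib, sum_const, card_univ, nsmul_eq_mul,
    ← mul_sum, ← sum_mul]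
  ring

theorem sum_sum_add_mul_add {R : Type*} [CommSemiring R] (f g : ι → R) :
    ∑ i, ∑ j, (f i + f j) * (g i + g j)
      = 2 * (Fintype.card ι * ∑ i, f i * g i + (∑ i, f i) * ∑ i, g i) := by
  simp only [add_mul, mul_add, sum_add_distrib, sum_const, card_univ, nsmul_eq_mul,
    ← mul_sum, ← sum_mul]
  ring

theorem sum_sub_sum_div_card (f : ι → ℝ) : ∑ i, (f i - (∑ j, f j) / Fintype.card ι) = 0 := by
  cases isEmpty_or_nonempty ι
  · simp
  · rw [sum_sub_distrib, sum_const, card_univ, nsmul_eq_mul, mul_div_cancel₀ _ (by positivity),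
      sub_self]

noncomputable def combinatorialSum (c d : ι → ℝ) (π : Equiv.Perm ι) : ℝ :=
  ∑ i, c i * d (π i)

theorem combinatorialSum_sub_mean (a b : ι → ℝ) (π : Equiv.Perm ι) :
    combinatorialSum (fun i => a i - (∑ k, a k) / Fintype.card ι)
        (fun j => b j - (∑ k, b k) / Fintype.card ι) π
      = combinatorialSum a b π - (∑ i, a i) * (∑ j, b j) / Fintype.card ι := by
  have hb : ∑ i, b (π i) = ∑ j, b j := Equiv.sum_comp π b
  unfold combinatorialSum
  calc ∑ i, (a i - (∑ k, a k) / Fintype.card ι) * (b (π i) - (∑ k, b k) / Fintype.card ι)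
      = ∑ i, (a i - (∑ k, a k) / Fintype.card ι) * b (π i)
          - (∑ i, (a i - (∑ k, a k) / Fintype.card ι)) * ((∑ k, b k) / Fintype.card ι) := by
        rw [sum_mul, ← sum_sub_distrib]
        simp only [mul_sub]
    _ = ∑ i, a i * b (π i) - (∑ k, a k) / Fintype.card ι * ∑ i, b (π i) := by
        rw [sum_sub_sum_div_card, zero_mul, sub_zero, mul_sum, ← sum_sub_distrib]
        simp only [sub_mul]
    _ = ∑ i, a i * b (π i) - (∑ i, a i) * (∑ j, b j) / Fintype.card ι := by
        rw [hb]
        ring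

theorem combinatorialSum_mul_swap [DecidableEq ι] (c d : ι → ℝ) (π : Equiv.Perm ι) (i j : ι) :
    combinatorialSum c d (π * Equiv.swap i j)
      = combinatorialSum c d π - (c i - c j) * (d (π i) - d (π j)) := by
  rcases eq_or_ne i j with rfl | hij
  · rw [Equiv.swap_self, ← Equiv.Perm.one_def, mul_one]
    simp
  have hdiff : ∑ k, (c k * d ((π * Equiv.swap i j) k) - c k * d (π k))
      = -((c i - c j) * (d (π i) - d (π j))) := by
    rw [Fintype.sum_eq_add i j hij fun k hk => by
      simp [Equiv.swap_apply_of_ne_of_ne hk.1 hk.2]]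
    simp only [Equiv.Perm.coe_mul, Function.comp_apply, Equiv.swap_apply_left,
      Equiv.swap_apply_right]
    ring
  rw [sum_sub_distrib] at hdiff
  unfold combinatorialSum
  linarith

variable {c d : ι → ℝ}

theorem two_mul_card_mul_combinatorialSum [DecidableEq ι] (hc : ∑ i, c i = 0)
    (π : Equiv.Perm ι) :
    2 * Fintype.card ι * combinatorialSum c d π
      = ∑ i, ∑ j, (combinatorialSum c d π - combinatorialSum c d (π * Equiv.swap i j)) := by
  simp only [combinatorialSum_mul_swap, sub_sub_cancel]
  rw [sum_sum_sub_mul_sub c (fun i => d (π i))]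
  simp only [combinatorialSum, hc, zero_mul, sub_zero]
  ring

theorem sum_sum_sq_sub_combinatorialSum_mul_swap_le [DecidableEq ι] {K : ℝ}
    (hK : ∀ s : Equiv.Perm ι, ∑ i, c i ^ 2 * d (s i) ^ 2 ≤ K) (π : Equiv.Perm ι) :
    ∑ i, ∑ j, (combinatorialSum c d π - combinatorialSum c d (π * Equiv.swap i j)) ^ 2
      ≤ 8 * (Fintype.card ι * K + (∑ i, c i ^ 2) * ∑ i, d i ^ 2) := by
  have hsq : ∀ x y : ℝ, (x - y) ^ 2 ≤ 2 * (x ^ 2 + y ^ 2) := fun x y => by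
    simpa [sub_eq_add_neg] using add_sq_le (a := x) (b := -y)
  have hdπ : ∑ i, d (π i) ^ 2 = ∑ i, d i ^ 2 := Equiv.sum_comp π (fun i => d i ^ 2)
  calc ∑ i, ∑ j, (combinatorialSum c d π - combinatorialSum c d (π * Equiv.swap i j)) ^ 2
      = ∑ i, ∑ j, (c i - c j) ^ 2 * (d (π i) - d (π j)) ^ 2 := by
        simp only [combinatorialSum_mul_swap, sub_sub_cancel, mul_pow]
    _ ≤ ∑ i, ∑ j, 4 * ((c i ^ 2 + c j ^ 2) * (d (π i) ^ 2 + d (π j) ^ 2)) := by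
        refine sum_le_sum fun i _ => sum_le_sum fun j _ => ?_
        calc (c i - c j) ^ 2 * (d (π i) - d (π j)) ^ 2
            ≤ (2 * (c i ^ 2 + c j ^ 2)) * (2 * (d (π i) ^ 2 + d (π j) ^ 2)) :=
              mul_le_mul (hsq _ _) (hsq _ _) (sq_nonneg _) (by positivity)
          _ = 4 * ((c i ^ 2 + c j ^ 2) * (d (π i) ^ 2 + d (π j) ^ 2)) := by ring
    _ = 8 * (Fintype.card ι * ∑ i, c i ^ 2 * d (π i) ^ 2 + (∑ i, c i ^ 2) * ∑ i, d i ^ 2) := by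
        simp only [← mul_sum]
        rw [sum_sum_add_mul_add (fun i => c i ^ 2) (fun i => d (π i) ^ 2), hdπ]
        ring
    _ ≤ 8 * (Fintype.card ι * K + (∑ i, c i ^ 2) * ∑ i, d i ^ 2) := by
        gcongr
        exact hK π

theorem sum_ite_le_mul_exp_of_combinatorialSum [DecidableEq ι] [Nonempty ι]
    (hc : ∑ i, c i = 0) {K : ℝ} (hK : ∀ s : Equiv.Perm ι, ∑ i, c i ^ 2 * d (s i) ^ 2 ≤ K)
    {C : ℝ} (hC : 2 * K + 2 * ((∑ i, c i ^ 2) * (∑ i, d i ^ 2) / Fintype.card ι) ≤ C)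
    {t : ℝ} (ht : 0 ≤ t) :
    (∑ π, if t ≤ combinatorialSum c d π then (1 : ℝ) else 0)
      ≤ Fintype.card (Equiv.Perm ι) * Real.exp (-t ^ 2 / (2 * C)) := by
  have hK0 : 0 ≤ K := (sum_nonneg fun i _ => by positivity).trans (hK 1)
  have hB : 8 * (Fintype.card ι * K + (∑ i, c i ^ 2) * ∑ i, d i ^ 2) / (4 * Fintype.card ι)
      = 2 * K + 2 * ((∑ i, c i ^ 2) * (∑ i, d i ^ 2) / Fintype.card ι) := by
    field_simp
    ring
  refine sum_ite_le_mul_exp_of_sum_exp_le _ (le_trans (by positivity) hC) (fun l hl =>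
    sum_exp_le_of_sum_mul_exp_le _ (fun μ hμ => ?_) hl) ht
  refine (sum_mul_exp_le_of_sum_sum_swap _ (two_mul_card_mul_combinatorialSum hc)
    (sum_sum_sq_sub_combinatorialSum_mul_swap_le hK) hμ.le).trans ?_
  rw [hB]
  gcongr

end CombinatorialSum

/-- Combinatorial Hoeffding inequality, version II (product matrices `a_{i,j} = a_i b_j`). -/
theorem combinatorial_hoeffding_II
    (N : ℕ) (hN : 1 ≤ N) (a b : Fin N → ℝ) (t : ℝ) (ht : 0 ≤ t) :
    permProb N (fun π =>
        t ≤ (∑ i, a i * b (π i)) - ((∑ i, a i) * (∑ j, b j)) / (N : ℝ))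
      ≤ Real.exp (-(t ^ 2) /
          (4 * (⨆ s : Equiv.Perm (Fin N),
              ∑ i, (a i - (∑ k, a k) / (N : ℝ)) ^ 2 * (b (s i) - (∑ k, b k) / (N : ℝ)) ^ 2)
           + 4 * ((∑ i, (a i - (∑ k, a k) / (N : ℝ)) ^ 2)
                * (∑ j, (b j - (∑ k, b k) / (N : ℝ)) ^ 2) / ((N : ℝ) - 1)))) := by
  set c : Fin N → ℝ := fun i => a i - (∑ k, a k) / N
  set d : Fin N → ℝ := fun j => b j - (∑ k, b k) / N
  set K : ℝ := ⨆ s : Equiv.Perm (Fin N), ∑ i, c i ^ 2 * d (s i) ^ 2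
  set σsq : ℝ := (∑ i, c i ^ 2) * (∑ j, d j ^ 2) / ((N : ℝ) - 1)
  have hcenter : ∀ π : Equiv.Perm (Fin N),
      ∑ i, a i * b (π i) - (∑ i, a i) * (∑ j, b j) / N = combinatorialSum c d π := fun π => by
    have := combinatorialSum_sub_mean a b π
    rw [Fintype.card_fin] at this
    exact this.symm
  have hc : ∑ i, c i = 0 := by simpa only [Fintype.card_fin] using sum_sub_sum_div_card a
  have hK : ∀ s : Equiv.Perm (Fin N), ∑ i, c i ^ 2 * d (s i) ^ 2 ≤ K :=
    le_ciSup (Finite.bddAbove_range _)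
  have hσsq : (∑ i, c i ^ 2) * (∑ j, d j ^ 2) / N ≤ σsq := by
    rcases hN.eq_or_lt with rfl | hN
    -- for `N = 1` the centred vector `c` vanishes, so the junk value of `/ 0` is harmless
    · simp [σsq, c]
    · have : (1 : ℝ) < N := by exact_mod_cast hN
      exact div_le_div_of_nonneg_left (by positivity) (by linarith) (by linarith)
  have : Nonempty (Fin N) := ⟨⟨0, hN⟩⟩
  have htail := sum_ite_le_mul_exp_of_combinatorialSum hc hK
    (C := 2 * K + 2 * σsq) (by simpa using hσsq) ht
  rw [permProb, div_le_iff₀ (by positivity)]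
  simp only [hcenter]
  calc _ ≤ _ := htail
    _ = _ := by
      rw [Fintype.card_perm, Fintype.card_fin, mul_comm]
      ring_nf
end

section
/- Bobkov's inequality (sub-Gaussian norm of a without-replacement sample mean): let z_1,…,z_N be fixed points, n ∈ {1,…,N}, and f a real-valued function on the population with (1/N)Σ_i (f(z_i) − P_N f)² > 0. Set C = sqrt( (12/n)·(1 + N/n) ) · ‖f − P_N f‖_{L²(P_N)}. Then for a uniform random permutation π of [N], E[ exp( ( (𝔓_{π,n} f − P_N f) / C )² ) ] ≤ 2; equivalently, the Orlicz ψ₂-norm of (𝔓_{π,n} − P_N)f is at most C. -/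
open Finset

/-- The finite-population mean `P_N f = N⁻¹ Σ_{i=1}^N f(z_i)`. -/
noncomputable def PN {𝒵 : Type*} (N : ℕ) (z : Fin N → 𝒵) (f : 𝒵 → ℝ) : ℝ :=
  (∑ i, f (z i)) / (N : ℝ)

/-- The without-replacement sample mean `𝔓_{π,n} f = n⁻¹ Σ_{i : π(i) ≤ n} f(z_i)`. -/
noncomputable def sampleMean {𝒵 : Type*} (N n : ℕ) (z : Fin N → 𝒵) (f : 𝒵 → ℝ)
    (π : Equiv.Perm (Fin N)) : ℝ :=
  (∑ i, if (π i : ℕ) < n then f (z i) else 0) / (n : ℝ)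

/-- `‖f − P_N f‖_{L²(P_N)} = sqrt( N⁻¹ Σ_i (f(z_i) − P_N f)² )`. -/
noncomputable def L2PN {𝒵 : Type*} (N : ℕ) (z : Fin N → 𝒵) (f : 𝒵 → ℝ) : ℝ :=
  Real.sqrt ((∑ i, (f (z i) - PN N z f) ^ 2) / (N : ℝ))

/-!
Write `a = f ∘ z - P_N f` and `T_m σ` for the sum of `a` over the first `m` sampled positions.
The heart of the proof is the sub-Gaussian bound `E exp (l T_m) ≤ exp (l² Σ aᵢ² / 2)`.
Swapping position `k` with `k + m` for each `k < m` according to independent fair coins leaves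
the uniform law of `σ` unchanged; averaging over the coins first, the two-point Hoeffding bound
`cosh x ≤ exp (x² / 2)` and then Cauchy–Schwarz give `M_m(l)² ≤ exp (l² Σ aᵢ² / 2) M_{2m}(l)`
for the moment generating functions `M_m`. When `2m > N` one passes to the complementary sample,
`T_m = -T_{N-m}`. So every normalised `M_m(l) / exp (l² Σ aᵢ² / 2)` squared is bounded by another
one, and their maximum is at most `1`. Finally `exp u² = π^{-1/2} ∫ exp (2ut - t²) dt` turns this
MGF bound into `E exp (T_n / d)² ≤ (1 - 2 Σ aᵢ² / d²)^{-1/2}`, which is at most `2` for the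
constant of the theorem.
-/

open Equiv MeasureTheory
open scoped Nat

section Exponential

open Real

theorem exp_add_exp_le (x y : ℝ) :
    exp x + exp y ≤ 2 * exp ((x + y) / 2 + (x - y) ^ 2 / 8) := by
  have hcosh : exp x + exp y = 2 * exp ((x + y) / 2) * cosh ((x - y) / 2) := by
    rw [cosh_eq, ← neg_div, neg_sub]
    have hx := exp_add ((x + y) / 2) ((x - y) / 2)
    have hy := exp_add ((x + y) / 2) ((y - x) / 2)
    rw [show (x + y) / 2 + (x - y) / 2 = x by ring] at hx
    rw [show (x + y) / 2 + (y - x) / 2 = y by ring] at hy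
    rw [hx, hy]; ring
  calc exp x + exp y = 2 * exp ((x + y) / 2) * cosh ((x - y) / 2) := hcosh
    _ ≤ 2 * exp ((x + y) / 2) * exp (((x - y) / 2) ^ 2 / 2) := by
      gcongr; exact cosh_le_exp_half_sq _
    _ = 2 * exp ((x + y) / 2 + (x - y) ^ 2 / 8) := by
      rw [mul_assoc, ← exp_add]; ring_nf

theorem sum_exp_sum_ite_le {ι : Type*} [Fintype ι] [DecidableEq ι] (u v : ι → ℝ) :
    ∑ ε : ι → Bool, exp (∑ i, if ε i then u i else v i)
      ≤ 2 ^ Fintype.card ι * exp (∑ i, ((u i + v i) / 2 + (u i - v i) ^ 2 / 8)) := by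
  calc ∑ ε : ι → Bool, exp (∑ i, if ε i then u i else v i)
      = ∏ i, (exp (u i) + exp (v i)) := by
        have hbool : ∀ i, exp (u i) + exp (v i) = ∑ b : Bool, exp (if b then u i else v i) :=
          fun i => by simp
        simp_rw [hbool, Fintype.prod_sum, exp_sum]
    _ ≤ ∏ i, 2 * exp ((u i + v i) / 2 + (u i - v i) ^ 2 / 8) :=
        prod_le_prod (fun i _ => by positivity) fun i _ => exp_add_exp_le _ _
    _ = _ := by rw [prod_mul_distrib, prod_const, card_univ, exp_sum]

theorem exp_sq_eq_integral (u : ℝ) :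
    exp (u ^ 2) = (√π)⁻¹ * ∫ t : ℝ, exp (2 * u * t - t ^ 2) := by
  have hshift : ∀ t : ℝ, exp (2 * u * t - t ^ 2) = exp (u ^ 2) * exp (-1 * (t - u) ^ 2) := by
    intro t; rw [← exp_add]; ring_nf
  simp_rw [hshift, integral_const_mul,
    integral_sub_right_eq_self (fun t => exp (-1 * t ^ 2)) u, integral_gaussian, div_one]
  field_simp [(sqrt_pos.2 pi_pos).ne']

theorem integrable_exp_mul_sub_sq (c : ℝ) : Integrable fun t : ℝ => exp (c * t - t ^ 2) := by
  have hshift : (fun t : ℝ => exp (c * t - t ^ 2))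
      = fun t => exp (c ^ 2 / 4) * exp (-1 * (t - c / 2) ^ 2) := by
    funext t; rw [← exp_add]; ring_nf
  rw [hshift]
  exact ((integrable_exp_neg_mul_sq one_pos).comp_sub_right _).const_mul _

theorem sum_exp_sq_div_card_le {ι : Type*} [Fintype ι] [Nonempty ι] (X : ι → ℝ) {v : ℝ}
    (hv : 2 * v < 1)
    (hmgf : ∀ l, (∑ i, exp (l * X i)) / Fintype.card ι ≤ exp (l ^ 2 * v / 2)) :
    (∑ i, exp (X i ^ 2)) / Fintype.card ι ≤ (√(1 - 2 * v))⁻¹ := by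
  have hcard : (0 : ℝ) < Fintype.card ι := by exact_mod_cast Fintype.card_pos
  have hb : 0 < 1 - 2 * v := by linarith
  have hpoint : ∀ t : ℝ, ∑ i, exp (2 * X i * t - t ^ 2)
      ≤ Fintype.card ι * exp (-(1 - 2 * v) * t ^ 2) := by
    intro t
    have h := (div_le_iff₀' hcard).1 (hmgf (2 * t))
    calc ∑ i, exp (2 * X i * t - t ^ 2) = (∑ i, exp (2 * t * X i)) * exp (-t ^ 2) := by
          rw [sum_mul]; refine sum_congr rfl fun i _ => ?_; rw [← exp_add]; ring_nf
      _ ≤ Fintype.card ι * exp ((2 * t) ^ 2 * v / 2) * exp (-t ^ 2) := by gcongr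
      _ = _ := by rw [mul_assoc, ← exp_add]; ring_nf
  have hint : ∫ t : ℝ, ∑ i, exp (2 * X i * t - t ^ 2)
      ≤ ∫ t : ℝ, Fintype.card ι * exp (-(1 - 2 * v) * t ^ 2) :=
    integral_mono (integrable_finsetSum _ fun i _ => integrable_exp_mul_sub_sq _)
      ((integrable_exp_neg_mul_sq hb).const_mul _) hpoint
  rw [integral_finsetSum _ fun i _ => integrable_exp_mul_sub_sq _, integral_const_mul,
    integral_gaussian, sqrt_div pi_pos.le] at hint
  rw [div_le_iff₀ hcard]
  -- integrate the MGF bound at `l = 2t` against the Gaussian weight `exp (-t²)`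
  simp_rw [exp_sq_eq_integral, ← mul_sum]
  calc (√π)⁻¹ * ∑ i, ∫ t, exp (2 * X i * t - t ^ 2)
      ≤ (√π)⁻¹ * (Fintype.card ι * (√π / √(1 - 2 * v))) := by gcongr
    _ = _ := by field_simp [(sqrt_pos.2 pi_pos).ne']

end Exponential

theorem le_one_of_forall_exists_sq_le {α : Type*} {s : Finset α} {f : α → ℝ}
    (h : ∀ x ∈ s, ∃ y ∈ s, f x ^ 2 ≤ f y) : ∀ x ∈ s, f x ≤ 1 := by
  intro x hx
  obtain ⟨x₀, hx₀, hmax⟩ := s.exists_max_image f ⟨x, hx⟩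
  obtain ⟨y, hy, hxy⟩ := h x₀ hx₀
  have : f x₀ ≤ 1 := by nlinarith [hmax y hy]
  exact (hmax x hx).trans this

theorem sum_range_ite_lt {M : Type*} [AddCommMonoid M] (g : ℕ → M) {m N : ℕ} (hm : m ≤ N) :
    ∑ j ∈ range N, (if j < m then g j else 0) = ∑ j ∈ range m, g j := by
  rw [← sum_range_add_sum_Ico _ hm, sum_eq_zero fun j hj => if_neg (mem_Ico.1 hj).1.not_gt,
    add_zero]
  exact sum_congr rfl fun j hj => if_pos (mem_range.1 hj)

theorem sum_range_pair_exponent_le (b : ℕ → ℝ) (m : ℕ) (l : ℝ) :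
    ∑ j ∈ range m, ((l * b (j + m) + l * b j) / 2 + (l * b (j + m) - l * b j) ^ 2 / 8)
      ≤ l * (∑ j ∈ range (2 * m), b j) / 2 + l ^ 2 * (∑ j ∈ range (2 * m), b j ^ 2) / 4 := by
  have hpoint : ∀ j ∈ range m,
      (l * b (j + m) + l * b j) / 2 + (l * b (j + m) - l * b j) ^ 2 / 8
        ≤ l / 2 * (b j + b (m + j)) + l ^ 2 / 4 * (b j ^ 2 + b (m + j) ^ 2) := by
    intro j _
    rw [add_comm j m]
    nlinarith [sq_nonneg (l * b (m + j) + l * b j)]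
  refine (sum_le_sum hpoint).trans_eq ?_
  rw [two_mul, sum_range_add, sum_range_add, sum_add_distrib, ← mul_sum, ← mul_sum,
    ← sum_add_distrib, ← sum_add_distrib]
  ring

section Sampling

open Real

variable {N : ℕ}

noncomputable def sampleSum (a : Fin N → ℝ) (m : ℕ) (σ : Perm (Fin N)) : ℝ :=
  ∑ i, if (σ i : ℕ) < m then a i else 0

noncomputable def sampledValue (a : Fin N → ℝ) (σ : Perm (Fin N)) (j : ℕ) : ℝ :=
  if h : j < N then a (σ.symm ⟨j, h⟩) else 0

theorem sampleSum_eq_sum_range (a : Fin N → ℝ) {m : ℕ} (hm : m ≤ N) (σ : Perm (Fin N)) :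
    sampleSum a m σ = ∑ j ∈ range m, sampledValue a σ j := by
  rw [sampleSum, ← σ.symm.sum_comp, ← sum_range_ite_lt _ hm,
    ← Fin.sum_univ_eq_sum_range (fun j => if j < m then sampledValue a σ j else 0)]
  simp [sampledValue]

theorem sum_range_sampledValue_sq (a : Fin N → ℝ) (σ : Perm (Fin N)) :
    ∑ j ∈ range N, sampledValue a σ j ^ 2 = ∑ i, a i ^ 2 := by
  rw [← Fin.sum_univ_eq_sum_range (fun j => sampledValue a σ j ^ 2), ← Equiv.sum_comp σ]
  simp [sampledValue]

theorem sampleSum_sub_const (a : Fin N → ℝ) (c : ℝ) {m : ℕ} (hm : m ≤ N) (σ : Perm (Fin N)) :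
    sampleSum (fun i => a i - c) m σ = sampleSum a m σ - m * c := by
  have hconst : sampleSum (fun _ => c) m σ = m * c := by
    rw [sampleSum_eq_sum_range _ hm, sum_congr rfl fun j hj => dif_pos (by
      have := mem_range.1 hj; omega), sum_const, card_range, nsmul_eq_mul]
  rw [← hconst, sampleSum, sampleSum, sampleSum, ← sum_sub_distrib]
  exact sum_congr rfl fun i _ => by split_ifs <;> simp

theorem sampleSum_revPerm_mul (a : Fin N → ℝ) (hsum : ∑ i, a i = 0) {m : ℕ} (hm : m ≤ N)
    (σ : Perm (Fin N)) : sampleSum a m (Fin.revPerm * σ) = -sampleSum a (N - m) σ := by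
  have hcompl : ∀ i, (if (((Fin.revPerm * σ : Perm (Fin N)) i : Fin N) : ℕ) < m then a i else 0)
      = a i - if (σ i : ℕ) < N - m then a i else 0 := by
    intro i
    have hlt := (σ i).isLt
    simp only [Perm.mul_apply, Fin.revPerm_apply, Fin.val_rev]
    split_ifs <;> first | (exfalso; omega) | ring
  rw [sampleSum, sum_congr rfl fun i _ => hcompl i, sum_sub_distrib, hsum, zero_sub, sampleSum]

def pairSwap (m : ℕ) (ε : Fin m → Bool) (k : ℕ) : ℕ :=
  if h : k < m then (if ε ⟨k, h⟩ then k + m else k)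
  else if h' : k < 2 * m then (if ε ⟨k - m, by omega⟩ then k - m else k) else k

theorem pairSwap_involutive (m : ℕ) (ε : Fin m → Bool) : Function.Involutive (pairSwap m ε) := by
  intro k
  unfold pairSwap
  by_cases h₁ : k < m
  · by_cases hε : ε ⟨k, h₁⟩ <;> simp [h₁, hε, two_mul]
  · by_cases h₂ : k < 2 * m
    · by_cases hε : ε ⟨k - m, by omega⟩
      · have : k - m < m := by omega
        simp [h₁, h₂, hε, this, Nat.sub_add_cancel (not_lt.1 h₁)]
      · simp [h₁, h₂, hε]
    · simp [h₁, h₂]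

theorem pairSwap_lt {m : ℕ} (hm : 2 * m ≤ N) (ε : Fin m → Bool) {k : ℕ} (hk : k < N) :
    pairSwap m ε k < N := by
  unfold pairSwap; split_ifs <;> omega

def pairSwapPerm {m : ℕ} (hm : 2 * m ≤ N) (ε : Fin m → Bool) : Perm (Fin N) :=
  Function.Involutive.toPerm (fun k => ⟨pairSwap m ε k, pairSwap_lt hm ε k.isLt⟩)
    fun k => Fin.ext (pairSwap_involutive m ε k)

theorem sampledValue_pairSwapPerm_mul (a : Fin N → ℝ) {m : ℕ} (hm : 2 * m ≤ N)
    (ε : Fin m → Bool) (σ : Perm (Fin N)) (j : ℕ) :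
    sampledValue a (pairSwapPerm hm ε * σ) j = sampledValue a σ (pairSwap m ε j) := by
  by_cases hj : j < N
  · simp only [sampledValue, hj, pairSwap_lt hm ε hj, dif_pos]
    rfl
  · have hfix : pairSwap m ε j = j := by unfold pairSwap; split_ifs <;> omega
    simp [sampledValue, hj, hfix]

theorem sampleSum_pairSwapPerm_mul (a : Fin N → ℝ) {m : ℕ} (hm : 2 * m ≤ N)
    (ε : Fin m → Bool) (σ : Perm (Fin N)) :
    sampleSum a m (pairSwapPerm hm ε * σ)
      = ∑ j : Fin m, if ε j then sampledValue a σ (j + m) else sampledValue a σ j := by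
  rw [sampleSum_eq_sum_range a (by omega), ← Fin.sum_univ_eq_sum_range]
  refine sum_congr rfl fun j _ => ?_
  rw [sampledValue_pairSwapPerm_mul, pairSwap, dif_pos j.isLt]
  split_ifs <;> rfl

theorem sum_exp_mul_sampleSum_pairSwapPerm_mul_le (a : Fin N → ℝ) {m : ℕ} (hm : 2 * m ≤ N)
    (σ : Perm (Fin N)) (l : ℝ) :
    ∑ ε : Fin m → Bool, exp (l * sampleSum a m (pairSwapPerm hm ε * σ))
      ≤ 2 ^ m * exp (l * sampleSum a (2 * m) σ / 2 + l ^ 2 * (∑ i, a i ^ 2) / 4) := by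
  set b := sampledValue a σ
  have hsq : ∑ j ∈ range (2 * m), b j ^ 2 ≤ ∑ i, a i ^ 2 := by
    rw [← sum_range_sampledValue_sq a σ]
    exact sum_le_sum_of_subset_of_nonneg (range_subset_range.2 hm) fun _ _ _ => sq_nonneg _
  calc ∑ ε : Fin m → Bool, exp (l * sampleSum a m (pairSwapPerm hm ε * σ))
      = ∑ ε : Fin m → Bool, exp (∑ j, if ε j then l * b (j + m) else l * b j) := by
        simp_rw [sampleSum_pairSwapPerm_mul, mul_sum, mul_ite]; rfl
    _ ≤ 2 ^ m * exp (∑ j ∈ range m,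
          ((l * b (j + m) + l * b j) / 2 + (l * b (j + m) - l * b j) ^ 2 / 8)) := by
        rw [← Fin.sum_univ_eq_sum_range (fun j => (l * b (j + m) + l * b j) / 2
          + (l * b (j + m) - l * b j) ^ 2 / 8)]
        simpa using sum_exp_sum_ite_le (fun j : Fin m => l * b (j + m)) (fun j => l * b j)
    _ ≤ 2 ^ m * exp (l * (∑ j ∈ range (2 * m), b j) / 2
          + l ^ 2 * (∑ j ∈ range (2 * m), b j ^ 2) / 4) := by
        gcongr; exact sum_range_pair_exponent_le b m l
    _ ≤ _ := by rw [sampleSum_eq_sum_range a hm]; gcongr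

theorem sum_exp_mul_sampleSum_le_of_two_mul_le (a : Fin N → ℝ) {m : ℕ} (hm : 2 * m ≤ N)
    (l : ℝ) : ∑ σ : Perm (Fin N), exp (l * sampleSum a m σ)
      ≤ exp (l ^ 2 * (∑ i, a i ^ 2) / 4)
        * ∑ σ : Perm (Fin N), exp (l * sampleSum a (2 * m) σ / 2) := by
  have hswap : ∀ ε : Fin m → Bool, ∑ σ : Perm (Fin N), exp (l * sampleSum a m σ)
      = ∑ σ : Perm (Fin N), exp (l * sampleSum a m (pairSwapPerm hm ε * σ)) :=
    fun ε => (Equiv.sum_comp (Equiv.mulLeft (pairSwapPerm hm ε)) _).symm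
  refine le_of_mul_le_mul_left ?_ (by positivity : (0 : ℝ) < 2 ^ m)
  calc 2 ^ m * ∑ σ : Perm (Fin N), exp (l * sampleSum a m σ)
      = ∑ σ : Perm (Fin N), ∑ ε : Fin m → Bool,
          exp (l * sampleSum a m (pairSwapPerm hm ε * σ)) := by
        rw [sum_comm, ← sum_congr rfl fun ε _ => hswap ε, sum_const, card_univ,
          Fintype.card_fun, Fintype.card_bool, Fintype.card_fin, nsmul_eq_mul]
        norm_cast
    _ ≤ ∑ σ : Perm (Fin N),
          2 ^ m * exp (l * sampleSum a (2 * m) σ / 2 + l ^ 2 * (∑ i, a i ^ 2) / 4) :=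
        sum_le_sum fun σ _ => sum_exp_mul_sampleSum_pairSwapPerm_mul_le a hm σ l
    _ = _ := by simp_rw [← mul_sum, exp_add, ← sum_mul]; ring

noncomputable def sampleMGF (a : Fin N → ℝ) (m : ℕ) (l : ℝ) : ℝ :=
  (∑ σ : Perm (Fin N), exp (l * sampleSum a m σ)) / N !

theorem sampleMGF_sq_le (a : Fin N → ℝ) {m : ℕ} (hm : 2 * m ≤ N) (l : ℝ) :
    sampleMGF a m l ^ 2 ≤ exp (l ^ 2 * (∑ i, a i ^ 2) / 2) * sampleMGF a (2 * m) l := by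
  set V := ∑ i, a i ^ 2
  have hcs : (∑ σ : Perm (Fin N), exp (l * sampleSum a (2 * m) σ / 2)) ^ 2
      ≤ N ! * ∑ σ : Perm (Fin N), exp (l * sampleSum a (2 * m) σ) := by
    have := sq_sum_le_card_mul_sum_sq (s := univ)
      (f := fun σ : Perm (Fin N) => exp (l * sampleSum a (2 * m) σ / 2))
    simpa only [← exp_nat_mul, card_univ, Fintype.card_perm, Fintype.card_fin, Nat.cast_ofNat,
      mul_div_cancel₀ _ (two_ne_zero' ℝ)] using this
  unfold sampleMGF
  rw [div_pow, div_le_iff₀ (by positivity)]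
  calc (∑ σ : Perm (Fin N), exp (l * sampleSum a m σ)) ^ 2
      ≤ (exp (l ^ 2 * V / 4) * ∑ σ : Perm (Fin N), exp (l * sampleSum a (2 * m) σ / 2)) ^ 2 := by
        gcongr; exact sum_exp_mul_sampleSum_le_of_two_mul_le a hm l
    _ ≤ exp (l ^ 2 * V / 4) ^ 2 * (N ! * ∑ σ : Perm (Fin N), exp (l * sampleSum a (2 * m) σ)) := by
        rw [mul_pow]; gcongr
    _ = _ := by rw [← exp_nat_mul]; field_simp; ring_nf

theorem sampleMGF_eq_sampleMGF_sub_neg (a : Fin N → ℝ) (hsum : ∑ i, a i = 0) {m : ℕ}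
    (hm : m ≤ N) (l : ℝ) : sampleMGF a m l = sampleMGF a (N - m) (-l) := by
  unfold sampleMGF
  rw [← Equiv.sum_comp (Equiv.mulLeft Fin.revPerm)]
  simp_rw [Equiv.coe_mulLeft, sampleSum_revPerm_mul a hsum hm, mul_neg, neg_mul]

theorem sampleMGF_le (a : Fin N → ℝ) (hsum : ∑ i, a i = 0) {m : ℕ} (hm : m ≤ N) (l : ℝ) :
    sampleMGF a m l ≤ exp (l ^ 2 * (∑ i, a i ^ 2) / 2) := by
  set E := exp (l ^ 2 * (∑ i, a i ^ 2) / 2)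
  have hstep : ∀ m ≤ N, ∃ m' ≤ N, sampleMGF a m l ^ 2 ≤ E * sampleMGF a m' l := by
    intro m hm
    by_cases h2m : 2 * m ≤ N
    · exact ⟨2 * m, h2m, sampleMGF_sq_le a h2m l⟩
    -- otherwise double the complementary sample, of size `N - m`, at `-l`
    · refine ⟨2 * m - N, by omega, ?_⟩
      have h := sampleMGF_sq_le a (m := N - m) (by omega) (-l)
      rwa [neg_sq, ← sampleMGF_eq_sampleMGF_sub_neg a hsum hm,
        show 2 * (N - m) = N - (2 * m - N) by omega,
        ← sampleMGF_eq_sampleMGF_sub_neg a hsum (by omega)] at h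
  have hE : 0 < E := exp_pos _
  -- the maximum over `m ≤ N` of `sampleMGF a m l / E` is at most its own square root
  have := le_one_of_forall_exists_sq_le (s := Iic N) (f := fun m => sampleMGF a m l / E)
    (fun m hm => by
      obtain ⟨m', hm', h⟩ := hstep m (mem_Iic.1 hm)
      refine ⟨m', mem_Iic.2 hm', ?_⟩
      rw [div_pow, div_le_div_iff₀ (by positivity) hE]
      nlinarith) m (mem_Iic.2 hm)
  rwa [div_le_one hE] at this

theorem sum_exp_sq_sampleSum_div_le (a : Fin N → ℝ) (hsum : ∑ i, a i = 0) {m : ℕ}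
    (hm : m ≤ N) {d : ℝ} (hd : 0 < d) (hV : 8 * ∑ i, a i ^ 2 ≤ 3 * d ^ 2) :
    (∑ σ : Perm (Fin N), exp ((sampleSum a m σ / d) ^ 2)) / N ! ≤ 2 := by
  set v := (∑ i, a i ^ 2) / d ^ 2 with hvdef
  have hv : 2 * v ≤ 3 / 4 := by
    rw [← le_div_iff₀' two_pos, div_le_iff₀ (by positivity)]; linarith
  have hmgf : ∀ l, (∑ σ : Perm (Fin N), exp (l * (sampleSum a m σ / d)))
      / Fintype.card (Perm (Fin N)) ≤ exp (l ^ 2 * v / 2) := by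
    intro l
    calc (∑ σ : Perm (Fin N), exp (l * (sampleSum a m σ / d))) / Fintype.card (Perm (Fin N))
        = sampleMGF a m (l / d) := by
          simp_rw [sampleMGF, Fintype.card_perm, Fintype.card_fin, mul_div, div_mul_eq_mul_div]
      _ ≤ exp ((l / d) ^ 2 * (∑ i, a i ^ 2) / 2) := sampleMGF_le a hsum hm _
      _ = exp (l ^ 2 * v / 2) := by rw [hvdef]; ring_nf
  have h := sum_exp_sq_div_card_le _ (by linarith) hmgf
  rw [Fintype.card_perm, Fintype.card_fin] at h
  refine h.trans ?_
  rw [inv_le_comm₀ (sqrt_pos.2 (by linarith)) two_pos, le_sqrt (by norm_num) (by linarith)]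
  linarith

end Sampling

theorem sum_sub_PN_eq_zero {𝒵 : Type*} {N : ℕ} (hN : N ≠ 0) (z : Fin N → 𝒵) (f : 𝒵 → ℝ) :
    ∑ i, (f (z i) - PN N z f) = 0 := by
  rw [sum_sub_distrib, sum_const, card_univ, Fintype.card_fin, nsmul_eq_mul, PN,
    mul_div_cancel₀ _ (Nat.cast_ne_zero.2 hN), sub_self]

theorem sum_sq_sub_PN_eq {𝒵 : Type*} {N : ℕ} (z : Fin N → 𝒵) (f : 𝒵 → ℝ) :
    ∑ i, (f (z i) - PN N z f) ^ 2 = N * L2PN N z f ^ 2 := by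
  rcases N.eq_zero_or_pos with rfl | hN
  · simp
  rw [L2PN, Real.sq_sqrt (by positivity), mul_div_cancel₀ _ (by positivity)]

theorem sampleMean_sub_PN {𝒵 : Type*} {N n : ℕ} (hn : n ≠ 0) (hnN : n ≤ N) (z : Fin N → 𝒵)
    (f : 𝒵 → ℝ) (σ : Equiv.Perm (Fin N)) :
    sampleMean N n z f σ - PN N z f = sampleSum (fun i => f (z i) - PN N z f) n σ / n := by
  rw [sampleSum_sub_const _ _ hnN, sub_div, mul_div_cancel_left₀ _ (Nat.cast_ne_zero.2 hn)]
  rfl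

/-- Bobkov's inequality: the sub-Gaussian (Orlicz ψ₂) norm of the without-replacement
sample mean deviation is at most
`C = sqrt((12/n)(1 + N/n)) · ‖f − P_N f‖_{L²(P_N)}`, i.e. `E[exp(((𝔓_{π,n}f − P_Nf)/C)²)] ≤ 2`. -/
theorem bobkov_inequality
    {𝒵 : Type*} (N n : ℕ) (hn1 : 1 ≤ n) (hnN : n ≤ N)
    (z : Fin N → 𝒵) (f : 𝒵 → ℝ)
    (hvar : 0 < L2PN N z f) :
    (∑ π : Equiv.Perm (Fin N),
        Real.exp (((sampleMean N n z f π - PN N z f) /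
          (Real.sqrt ((12 / (n : ℝ)) * (1 + (N : ℝ) / (n : ℝ))) * L2PN N z f)) ^ 2))
      / (Nat.factorial N : ℝ) ≤ 2 := by
  set C := Real.sqrt ((12 / (n : ℝ)) * (1 + (N : ℝ) / (n : ℝ))) * L2PN N z f
  have hn : (0 : ℝ) < n := by exact_mod_cast hn1
  have hC : 0 < C := by positivity
  have hdev : ∀ π : Equiv.Perm (Fin N), (sampleMean N n z f π - PN N z f) / C
      = sampleSum (fun i => f (z i) - PN N z f) n π / (n * C) := fun π => by
    rw [sampleMean_sub_PN (by omega) hnN, div_div]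
  have hV : 8 * ∑ i, (f (z i) - PN N z f) ^ 2 ≤ 3 * (n * C) ^ 2 := by
    rw [sum_sq_sub_PN_eq, mul_pow, mul_pow, Real.sq_sqrt (by positivity)]
    field_simp
    nlinarith [sq_nonneg (L2PN N z f)]
  simp_rw [hdev]
  exact sum_exp_sq_sampleSum_div_le _ (sum_sub_PN_eq_zero (by omega) z f) hnN (by positivity) hV
end
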